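/- arXiv:2104.03055 — 10 statements merged into one kernel-verified Lean document; each statement's English description precedes it below -/
import Mathlib

section
/- A finite simple graph G is a threshold graph if and only if G has a 2-lettering over the alphabet Fin 2 with the fixed decoder D = {(0,1),(1,1)}. -/
/-- Add an isolated vertex (the new vertex `none`) to a graph. -/
def addIsolated {V : Type} (G : SimpleGraph V) : SimpleGraph (Option V) where
  Adj a b := ∃ u v, a = some u ∧ b = some v ∧ G.Adj u v
  symm := ⟨by rintro a b ⟨u, v, rfl, rfl, h⟩; exact ⟨v, u, rfl, rfl, h.symm⟩⟩
  loopless := ⟨by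
    rintro a ⟨u, v, hu, hv, h⟩
    rw [hu] at hv
    cases Option.some.inj hv
    exact G.loopless.irrefl u h⟩

/-- Add a dominating vertex (the new vertex `none`) to a graph. -/
def addDominating {V : Type} (G : SimpleGraph V) : SimpleGraph (Option V) where
  Adj a b := (∃ u v, a = some u ∧ b = some v ∧ G.Adj u v) ∨
    (a = none ∧ b ≠ none) ∨ (b = none ∧ a ≠ none)
  symm := ⟨by
    rintro a b (⟨u, v, rfl, rfl, h⟩ | ⟨rfl, hb⟩ | ⟨rfl, ha⟩)
    · exact Or.inl ⟨v, u, rfl, rfl, h.symm⟩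
    · exact Or.inr (Or.inr ⟨rfl, hb⟩)
    · exact Or.inr (Or.inl ⟨rfl, ha⟩)⟩
  loopless := ⟨by
    rintro a (⟨u, v, hu, hv, h⟩ | ⟨rfl, hb⟩ | ⟨rfl, ha⟩)
    · rw [hu] at hv
      cases Option.some.inj hv
      exact G.loopless.irrefl u h
    · exact hb rfl
    · exact ha rfl⟩

/-- The threshold graphs: the smallest isomorphism-closed class of finite graphs
containing the empty graph `K₀` and closed under adding an isolated vertex and
under adding a dominating vertex. -/
inductive IsThreshold : {V : Type} → SimpleGraph V → Prop where
  | empty : IsThreshold (⊥ : SimpleGraph Empty)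
  | addIso {V : Type} {G : SimpleGraph V} : IsThreshold G → IsThreshold (addIsolated G)
  | addDom {V : Type} {G : SimpleGraph V} : IsThreshold G → IsThreshold (addDominating G)
  | iso {V W : Type} {G : SimpleGraph V} {H : SimpleGraph W} :
      G ≃g H → IsThreshold G → IsThreshold H

section Aux

lemma mem_D_iff (p q : Fin 2) :
    ((p, q) ∈ ({(0, 1), (1, 1)} : Set (Fin 2 × Fin 2))) ↔ q = 1 := by
  fin_cases p <;> fin_cases q <;> simp [Set.mem_insert_iff, Prod.ext_iff]

lemma forward_aux {V : Type} {G : SimpleGraph V} (h : IsThreshold G) :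
    ∃ (L : V → Fin 2) (ord : V → ℕ) (N : ℕ), Function.Injective ord ∧
      (∀ v, ord v < N) ∧
      ∀ u v : V, u ≠ v → ord u < ord v →
        (G.Adj u v ↔ (L u, L v) ∈ ({(0, 1), (1, 1)} : Set (Fin 2 × Fin 2))) := by
  induction h with
  | empty =>
      exact ⟨fun x => x.elim, fun x => x.elim, 1, fun x => x.elim,
        fun x => x.elim, fun x => x.elim⟩
  | @addIso V G _ ih =>
      obtain ⟨L, ord, N, hinj, hbd, hadj⟩ := ih
      refine ⟨fun a => a.elim 0 L, fun a => a.elim N ord, N + 1, ?_, ?_, ?_⟩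
      · rintro (_|u) (_|v) h
        · rfl
        · exact absurd h.symm (Nat.ne_of_lt (hbd v))
        · exact absurd h (Nat.ne_of_lt (hbd u))
        · exact congrArg some (hinj h)
      · rintro (_|v)
        · exact Nat.lt_succ_self N
        · exact Nat.lt_succ_of_lt (hbd v)
      · rintro (_|u) (_|v) hne hlt
        · exact absurd rfl hne
        · exact absurd (hbd v) (Nat.lt_asymm hlt)
        · simp only [addIsolated]
          rw [mem_D_iff]
          constructor
          · rintro ⟨a, b, _, hb, _⟩; exact absurd hb (by simp)
          · intro h; exact absurd h (by show (0 : Fin 2) ≠ 1; decide)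
        · simp only [addIsolated]
          rw [show ((some u).elim (0 : Fin 2) L, (some v).elim 0 L)
              = (L u, L v) from rfl]
          rw [← hadj u v (fun h => hne (congrArg some h)) hlt]
          constructor
          · rintro ⟨a, b, ha, hb, h⟩
            cases Option.some.inj ha; cases Option.some.inj hb; exact h
          · intro h; exact ⟨u, v, rfl, rfl, h⟩
  | @addDom V G _ ih =>
      obtain ⟨L, ord, N, hinj, hbd, hadj⟩ := ih
      refine ⟨fun a => a.elim 1 L, fun a => a.elim N ord, N + 1, ?_, ?_, ?_⟩
      · rintro (_|u) (_|v) h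
        · rfl
        · exact absurd h.symm (Nat.ne_of_lt (hbd v))
        · exact absurd h (Nat.ne_of_lt (hbd u))
        · exact congrArg some (hinj h)
      · rintro (_|v)
        · exact Nat.lt_succ_self N
        · exact Nat.lt_succ_of_lt (hbd v)
      · rintro (_|u) (_|v) hne hlt
        · exact absurd rfl hne
        · exact absurd (hbd v) (Nat.lt_asymm hlt)
        · simp only [addDominating]
          rw [mem_D_iff]
          constructor
          · intro _; rfl
          · intro _; exact Or.inr (Or.inr ⟨by simp, by simp⟩)
        · simp only [addDominating]
          rw [show ((some u).elim (1 : Fin 2) L, (some v).elim 1 L)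
              = (L u, L v) from rfl]
          rw [← hadj u v (fun h => hne (congrArg some h)) hlt]
          constructor
          · rintro (⟨a, b, ha, hb, h⟩ | ⟨ha, _⟩ | ⟨hb, _⟩)
            · cases Option.some.inj ha; cases Option.some.inj hb; exact h
            · exact absurd ha (by simp)
            · exact absurd hb (by simp)
          · intro h; exact Or.inl ⟨u, v, rfl, rfl, h⟩
  | @iso V W G H e _ ih =>
      obtain ⟨L, ord, N, hinj, hbd, hadj⟩ := ih
      refine ⟨L ∘ e.symm, ord ∘ e.symm, N, hinj.comp e.symm.injective,
        fun v => hbd _, fun u v hne hlt => ?_⟩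
      rw [← e.symm.map_adj_iff]
      exact hadj _ _ (fun h => hne (e.symm.injective h)) hlt

lemma backward_aux : ∀ (n : ℕ) (V : Type) [Fintype V] [DecidableEq V]
    (G : SimpleGraph V), Fintype.card V = n →
    (∃ (L : V → Fin 2) (ord : V → ℕ), Function.Injective ord ∧
      ∀ u v : V, u ≠ v → ord u < ord v →
        (G.Adj u v ↔ (L u, L v) ∈ ({(0, 1), (1, 1)} : Set (Fin 2 × Fin 2)))) →
    IsThreshold G := by
  intro n
  induction n with
  | zero =>
      intro V _ _ G hcard _
      have : IsEmpty V := Fintype.card_eq_zero_iff.mp hcard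
      refine IsThreshold.iso ⟨Equiv.equivOfIsEmpty Empty V, ?_⟩ IsThreshold.empty
      intro a; exact a.elim
  | succ n ih =>
      intro V _ _ G hcard ⟨L, ord, hinj, hadj⟩
      have hne : (Finset.univ : Finset V).Nonempty := by
        rw [Finset.univ_nonempty_iff]
        exact Fintype.card_pos_iff.mp (hcard ▸ Nat.succ_pos n)
      obtain ⟨v₀, -, hmax⟩ := Finset.exists_max_image Finset.univ ord hne
      -- key fact: for u ≠ v₀, G.Adj u v₀ ↔ L v₀ = 1
      have key : ∀ u : V, u ≠ v₀ → (G.Adj u v₀ ↔ L v₀ = 1) := by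
        intro u hu
        have hlt : ord u < ord v₀ :=
          lt_of_le_of_ne (hmax u (Finset.mem_univ u)) (fun h => hu (hinj h))
        rw [hadj u v₀ hu hlt, mem_D_iff]
      set V' := {v : V // v ≠ v₀} with hV'
      have hcard' : Fintype.card V' = n := by
        have h1 : Fintype.card {v : V // ¬v = v₀} =
            Fintype.card V - Fintype.card {v : V // v = v₀} :=
          Fintype.card_subtype_compl _
        rw [Fintype.card_subtype_eq, hcard] at h1
        simpa [hV'] using h1
      set G' : SimpleGraph V' := G.comap Subtype.val with hG'
      have hG'T : IsThreshold G' := by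
        refine ih V' G' hcard' ⟨L ∘ Subtype.val, ord ∘ Subtype.val,
          fun a b h => Subtype.ext (hinj h), fun u v huv hlt => ?_⟩
        exact hadj u.val v.val (fun h => huv (Subtype.ext h)) hlt
      by_cases hl : L v₀ = 1
      · -- dominating
        refine IsThreshold.iso ⟨Equiv.optionSubtypeNe v₀, ?_⟩ (IsThreshold.addDom hG'T)
        rintro (_|a) (_|b)
        · simp [addDominating]
        · simp only [Equiv.optionSubtypeNe_none, Equiv.optionSubtypeNe_some]
          rw [G.adj_comm]
          rw [key b.val b.property]
          simp [addDominating, hl]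
        · simp only [Equiv.optionSubtypeNe_none, Equiv.optionSubtypeNe_some]
          rw [key a.val a.property]
          simp [addDominating, hl]
        · simp only [Equiv.optionSubtypeNe_some]
          constructor
          · intro h; exact Or.inl ⟨a, b, rfl, rfl, h⟩
          · rintro (⟨x, y, hx, hy, h⟩ | ⟨hx, _⟩ | ⟨hy, _⟩)
            · cases Option.some.inj hx; cases Option.some.inj hy; exact h
            · exact absurd hx (by simp)
            · exact absurd hy (by simp)
      · -- isolated
        have hl0 : L v₀ = 1 → False := hl
        refine IsThreshold.iso ⟨Equiv.optionSubtypeNe v₀, ?_⟩ (IsThreshold.addIso hG'T)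
        rintro (_|a) (_|b)
        · simp [addIsolated]
        · simp only [Equiv.optionSubtypeNe_none, Equiv.optionSubtypeNe_some]
          rw [G.adj_comm]
          rw [key b.val b.property]
          constructor
          · intro h; exact absurd h hl0
          · rintro ⟨x, y, hx, _, _⟩; exact absurd hx (by simp)
        · simp only [Equiv.optionSubtypeNe_none, Equiv.optionSubtypeNe_some]
          rw [key a.val a.property]
          constructor
          · intro h; exact absurd h hl0
          · rintro ⟨x, y, _, hy, _⟩; exact absurd hy (by simp)
        · simp only [Equiv.optionSubtypeNe_some]
          constructor
          · intro h; exact ⟨a, b, rfl, rfl, h⟩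
          · rintro ⟨x, y, hx, hy, h⟩
            cases Option.some.inj hx; cases Option.some.inj hy; exact h

end Aux

/-- A finite simple graph is a threshold graph if and only if it has a
`2`-lettering over `Fin 2` with the fixed decoder `D = {(0,1), (1,1)}`. -/
theorem isThreshold_iff_two_lettering (V : Type) [Fintype V] (G : SimpleGraph V) :
    IsThreshold G ↔
      ∃ (L : V → Fin 2) (ord : V → ℕ), Function.Injective ord ∧
        ∀ u v : V, u ≠ v → ord u < ord v →
          (G.Adj u v ↔ (L u, L v) ∈ ({(0, 1), (1, 1)} : Set (Fin 2 × Fin 2))) := by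
  classical
  constructor
  · intro h
    obtain ⟨L, ord, N, hinj, _, hadj⟩ := forward_aux h
    exact ⟨L, ord, hinj, hadj⟩
  · intro h
    exact backward_aux (Fintype.card V) V G rfl h
end

section
/- Let G be a finite simple graph with a k-lettering given by decoder D, letters L, and order ord. If u and w are distinct vertices with L u = L w and ord u < ord w, and a third vertex v is adjacent to exactly one of u and w (i.e., v distinguishes u and w), then ord u < ord v < ord w. -/
/-! A vertex `v` sees two equally lettered vertices `u`, `w` through the same decoder entry
`(L v, L u) = (L v, L w)` when it precedes both of them, and through `(L u, L v) = (L w, L v)`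
when it follows both. So a distinguisher can neither precede nor follow both, and since `ord`
is injective it lies strictly between them. -/

section Lettering

variable {V α : Type*} {G : SimpleGraph V} {D : Set (α × α)} {L : V → α} {ord : V → ℕ}
  {u w v : V}

theorem adj_iff_adj_of_lt_of_lt
    (hlet : ∀ u v : V, u ≠ v → ord u < ord v → (G.Adj u v ↔ (L u, L v) ∈ D))
    (hL : L u = L w) (hvu : v ≠ u) (hvw : v ≠ w) (hu : ord v < ord u) (hw : ord v < ord w) :
    G.Adj v u ↔ G.Adj v w := by
  rw [hlet v u hvu hu, hlet v w hvw hw, hL]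

theorem adj_iff_adj_of_gt_of_gt
    (hlet : ∀ u v : V, u ≠ v → ord u < ord v → (G.Adj u v ↔ (L u, L v) ∈ D))
    (hL : L u = L w) (hvu : v ≠ u) (hvw : v ≠ w) (hu : ord u < ord v) (hw : ord w < ord v) :
    G.Adj v u ↔ G.Adj v w := by
  rw [G.adj_comm v u, G.adj_comm v w, hlet u v hvu.symm hu, hlet w v hvw.symm hw, hL]

end Lettering

theorem distinguisher_between_general (V : Type) (G : SimpleGraph V) (k : ℕ)
    (D : Set (Fin k × Fin k)) (L : V → Fin k) (ord : V → ℕ)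
    (hinj : Function.Injective ord)
    (hlet : ∀ u v : V, u ≠ v → ord u < ord v → (G.Adj u v ↔ (L u, L v) ∈ D))
    (u w v : V) (hL : L u = L w) (hord : ord u < ord w)
    (hvu : v ≠ u) (hvw : v ≠ w)
    (hdist : Xor' (G.Adj v u) (G.Adj v w)) :
    ord u < ord v ∧ ord v < ord w := by
  have hnot_iff : ¬(G.Adj v u ↔ G.Adj v w) := xor_iff_not_iff _ _ |>.mp hdist
  constructor
  · by_contra! hvu_le
    have hvu_lt : ord v < ord u := hvu_le.lt_of_ne (hinj.ne hvu)
    exact hnot_iff (adj_iff_adj_of_lt_of_lt hlet hL hvu hvw hvu_lt (hvu_lt.trans hord))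
  · by_contra! hwv_le
    have hwv_lt : ord w < ord v := hwv_le.lt_of_ne (hinj.ne hvw).symm
    exact hnot_iff (adj_iff_adj_of_gt_of_gt hlet hL hvu hvw (hord.trans hwv_lt) hwv_lt)

/-- In any lettering of a graph, if two vertices `u` and `w` get the same letter
with `ord u < ord w`, and a third vertex `v` distinguishes them (is adjacent to
exactly one of them), then `v` must lie between them: `ord u < ord v < ord w`. -/
theorem distinguisher_between (V : Type) [Fintype V] (G : SimpleGraph V) (k : ℕ)
    (D : Set (Fin k × Fin k)) (L : V → Fin k) (ord : V → ℕ)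
    (hinj : Function.Injective ord)
    (hlet : ∀ u v : V, u ≠ v → ord u < ord v → (G.Adj u v ↔ (L u, L v) ∈ D))
    (u w v : V) (huw : u ≠ w) (hL : L u = L w) (hord : ord u < ord w)
    (hvu : v ≠ u) (hvw : v ≠ w)
    (hdist : Xor' (G.Adj v u) (G.Adj v w)) :
    ord u < ord v ∧ ord v < ord w :=
  distinguisher_between_general V G k D L ord hinj hlet u w v hL hord hvu hvw hdist
end

section
/- For every positive integer m, the lettericity of the perfect matching mK₂ is exactly m: ℓ(mK₂) = m. -/
/-!
Giving the `m` edges distinct letters, with the decoder "same letter", letters `mK₂`.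
Conversely, in any lettering take the earlier endpoint `uᵢ` of each edge `uᵢwᵢ`. If `i ≠ j` and
`uᵢ` comes before `uⱼ`, then `uᵢ` and `uⱼ` both precede `wⱼ` but only `uⱼ` is adjacent to it,
so the decoder tells their letters apart: the `m` earlier endpoints carry `m` distinct letters.
-/

/-- A `k`-lettering of a graph `G`: a decoder `D ⊆ Fin k × Fin k`, a letter
assignment `L`, and an injective ordering `ord` such that for `ord u < ord v`,
`u` and `v` are adjacent iff `(L u, L v) ∈ D`. -/
def HasLettering {V : Type*} (G : SimpleGraph V) (k : ℕ) : Prop :=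
  ∃ (D : Set (Fin k × Fin k)) (L : V → Fin k) (ord : V → ℕ),
    Function.Injective ord ∧
    ∀ u v : V, u ≠ v → ord u < ord v → (G.Adj u v ↔ (L u, L v) ∈ D)

/-- The lettericity of a graph: the least `k` such that it has a `k`-lettering. -/
noncomputable def lettericity {V : Type*} (G : SimpleGraph V) : ℕ :=
  sInf {k | HasLettering G k}

/-- The matching `mK₂`: the disjoint union of `m` single edges. -/
def matchingGraph (m : ℕ) : SimpleGraph (Fin m × Fin 2) where
  Adj a b := a.1 = b.1 ∧ a.2 ≠ b.2
  symm := by constructor; rintro a b ⟨h1, h2⟩; exact ⟨h1.symm, h2.symm⟩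
  loopless := by constructor; rintro a ⟨h1, h2⟩; exact h2 rfl

theorem letter_ne_of_adj_of_not_adj {V : Type*} {G : SimpleGraph V} {k : ℕ}
    {D : Set (Fin k × Fin k)} {L : V → Fin k} {ord : V → ℕ}
    (hdec : ∀ u v : V, u ≠ v → ord u < ord v → (G.Adj u v ↔ (L u, L v) ∈ D))
    {u u' w : V} (huu' : ord u < ord u') (hu'w : ord u' < ord w)
    (hadj : G.Adj u' w) (hnadj : ¬ G.Adj u w) : L u ≠ L u' := by
  intro hL
  have hmem : (L u', L w) ∈ D := (hdec u' w hadj.ne hu'w).1 hadj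
  have huw : u ≠ w := fun h => (huu'.trans hu'w).ne (congrArg ord h)
  exact hnadj ((hdec u w huw (huu'.trans hu'w)).2 (hL ▸ hmem))

theorem hasLettering_matchingGraph (m : ℕ) : HasLettering (matchingGraph m) m :=
  ⟨{p | p.1 = p.2}, Prod.fst, fun v => finProdFinEquiv v,
    Fin.val_injective.comp finProdFinEquiv.injective,
    fun _ _ huv _ => ⟨And.left, fun h => ⟨h, fun h' => huv (Prod.ext h h')⟩⟩⟩

theorem le_of_hasLettering_matchingGraph {m k : ℕ} (h : HasLettering (matchingGraph m) k) :
    m ≤ k := by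
  obtain ⟨D, L, ord, hinj, hdec⟩ := h
  have hsplit : ∀ i : Fin m, ∃ s t : Fin 2, s ≠ t ∧ ord (i, s) < ord (i, t) := fun i => by
    rcases lt_or_gt_of_ne (hinj.ne (by simp : ((i, 0) : Fin m × Fin 2) ≠ (i, 1))) with h | h
    exacts [⟨0, 1, by decide, h⟩, ⟨1, 0, by decide, h⟩]
  choose s t hst hlt using hsplit
  have hletter_ne : ∀ i j, i ≠ j → ord (i, s i) < ord (j, s j) → L (i, s i) ≠ L (j, s j) :=
    fun i j hij hord => letter_ne_of_adj_of_not_adj hdec hord (hlt j) ⟨rfl, hst j⟩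
      fun h => hij h.1
  have hL : Function.Injective fun i => L (i, s i) := by
    intro i j hLij
    by_contra hij
    have hord : ord (i, s i) ≠ ord (j, s j) := hinj.ne fun h => hij (congrArg Prod.fst h)
    rcases lt_or_gt_of_ne hord with h | h
    exacts [hletter_ne i j hij h hLij, hletter_ne j i (Ne.symm hij) h hLij.symm]
  simpa using Fintype.card_le_of_injective _ hL

theorem lettericity_matching_general (m : ℕ) :
    lettericity (matchingGraph m) = m :=
  IsLeast.csInf_eq ⟨hasLettering_matchingGraph m, fun _ => le_of_hasLettering_matchingGraph⟩

/-- For every positive integer `m`, the lettericity of the perfect matching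
`mK₂` is exactly `m`. -/
theorem lettericity_matching (m : ℕ) (hm : 0 < m) :
    lettericity (matchingGraph m) = m :=
  lettericity_matching_general m
end

section
/- The matching 3K₂ (the disjoint union of three edges) has lettericity exactly 3; in particular, 3K₂ has no 2-lettering. -/
/-!
In any lettering, the ord-first vertex `v` is adjacent to another vertex exactly when the letter of
that vertex lies in a fixed set, so no vertex outside `v`'s edge carries the letter of `v`'s
partner. With at most two letters, all vertices of the remaining edges then share one letter; but
adjacency between vertices of equal letter is decided by the decoder alone, whereas the remaining
edges contain both an adjacent and a non-adjacent pair. Conversely, lettering each vertex of `mK₂`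
by its edge, with the diagonal as decoder, is an `m`-lettering.
-/

structure IsLettering {V : Type*} (G : SimpleGraph V) {k : ℕ} (D : Set (Fin k × Fin k))
    (L : V → Fin k) (ord : V → ℕ) : Prop where
  injective : Function.Injective ord
  adj_iff : ∀ u v : V, u ≠ v → ord u < ord v → (G.Adj u v ↔ (L u, L v) ∈ D)

theorem hasLettering_iff {V : Type*} (G : SimpleGraph V) (k : ℕ) :
    HasLettering G k ↔
      ∃ (D : Set (Fin k × Fin k)) (L : V → Fin k) (ord : V → ℕ), IsLettering G D L ord :=
  ⟨fun ⟨D, L, ord, hinj, hadj⟩ => ⟨D, L, ord, hinj, hadj⟩,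
    fun ⟨D, L, ord, hinj, hadj⟩ => ⟨D, L, ord, hinj, hadj⟩⟩

namespace IsLettering

variable {V : Type*} {G : SimpleGraph V} {k : ℕ} {D : Set (Fin k × Fin k)} {L : V → Fin k}
  {ord : V → ℕ}

theorem adj_iff_of_letter_eq (hL : IsLettering G D L ord) {u w : V} (huw : u ≠ w)
    (hlet : L w = L u) : G.Adj u w ↔ (L u, L u) ∈ D := by
  rcases (hL.injective.ne huw).lt_or_gt with hlt | hgt
  · rw [hL.adj_iff u w huw hlt, hlet]
  · rw [G.adj_comm, hL.adj_iff w u huw.symm hgt, hlet]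

theorem adj_iff_of_isMin (hL : IsLettering G D L ord) {v w : V} (hv : ∀ x, ord v ≤ ord x)
    (hvw : v ≠ w) : G.Adj v w ↔ (L v, L w) ∈ D :=
  hL.adj_iff v w hvw ((hv w).lt_of_ne (hL.injective.ne hvw))

theorem letter_ne_of_isMin (hL : IsLettering G D L ord) {v u w : V} (hv : ∀ x, ord v ≤ ord x)
    (hu : G.Adj v u) (hw : ¬ G.Adj v w) (hvw : v ≠ w) : L w ≠ L u := by
  intro hlet
  apply hw
  rw [hL.adj_iff_of_isMin hv hvw, hlet]
  exact (hL.adj_iff_of_isMin hv (G.ne_of_adj hu)).mp hu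

end IsLettering

theorem Fin.eq_of_ne_of_ne_of_le_two {k : ℕ} (hk : k ≤ 2) {a b c : Fin k} (ha : a ≠ c)
    (hb : b ≠ c) : a = b := by
  rw [Fin.ne_iff_vne] at ha hb
  have := c.isLt
  omega

theorem matchingGraph_adj_iff {m : ℕ} {a b : Fin m × Fin 2} :
    (matchingGraph m).Adj a b ↔ a.1 = b.1 ∧ a.2 ≠ b.2 :=
  Iff.rfl

theorem exists_ne_ne_of_three_le {m : ℕ} (hm : 3 ≤ m) (a : Fin m) :
    ∃ i j : Fin m, i ≠ a ∧ j ≠ a ∧ i ≠ j := by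
  have hcard : 1 < (Finset.univ.erase a).card := by
    rw [Finset.card_erase_of_mem (Finset.mem_univ a), Finset.card_univ, Fintype.card_fin]
    omega
  obtain ⟨i, hi, j, hj, hij⟩ := Finset.one_lt_card.mp hcard
  exact ⟨i, j, Finset.ne_of_mem_erase hi, Finset.ne_of_mem_erase hj, hij⟩

theorem not_hasLettering_matchingGraph {m k : ℕ} (hm : 3 ≤ m) (hk : k ≤ 2) :
    ¬ HasLettering (matchingGraph m) k := by
  rw [hasLettering_iff]
  rintro ⟨D, L, ord, hL⟩
  have : Nonempty (Fin m × Fin 2) := ⟨(⟨0, by omega⟩, 0)⟩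
  obtain ⟨v, hv⟩ := Finite.exists_min ord
  obtain ⟨b, hb⟩ := exists_ne v.2
  obtain ⟨i, j, hi, hj, hij⟩ := exists_ne_ne_of_three_le hm v.1
  have hvu : (matchingGraph m).Adj v (v.1, b) := ⟨rfl, hb.symm⟩
  let x : Fin m × Fin 2 := (i, 0)
  let y : Fin m × Fin 2 := (i, 1)
  let z : Fin m × Fin 2 := (j, 0)
  have hletter : ∀ w : Fin m × Fin 2, w.1 ≠ v.1 → L w ≠ L (v.1, b) := fun w hw =>
    hL.letter_ne_of_isMin hv hvu (fun h => hw h.1.symm) (fun h => hw (congrArg Prod.fst h).symm)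
  have hxy : (matchingGraph m).Adj x y := ⟨rfl, Fin.zero_ne_one⟩
  have hxz : ¬ (matchingGraph m).Adj x z := fun h => hij h.1
  have hy : L y = L x := Fin.eq_of_ne_of_ne_of_le_two hk (hletter y hi) (hletter x hi)
  have hz : L z = L x := Fin.eq_of_ne_of_ne_of_le_two hk (hletter z hj) (hletter x hi)
  exact hxz ((hL.adj_iff_of_letter_eq (fun h => hij (congrArg Prod.fst h)) hz).mpr
    ((hL.adj_iff_of_letter_eq hxy.ne hy).mp hxy))

/-- The matching `3K₂` has lettericity exactly `3`; in particular it has no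
`2`-lettering. -/
theorem lettericity_three_matching :
    lettericity (matchingGraph 3) = 3 ∧ ¬ HasLettering (matchingGraph 3) 2 := by
  refine ⟨IsLeast.csInf_eq ⟨hasLettering_matchingGraph 3, fun k hk => ?_⟩,
    not_hasLettering_matchingGraph le_rfl le_rfl⟩
  by_contra! hlt
  exact not_hasLettering_matchingGraph le_rfl (by omega) hk
end

section
/- For every positive integer n, the stacked path R_n contains no induced subgraph isomorphic to 2K₂ and no induced subgraph isomorphic to the complement of 2K₂. -/
/-- The stacked path `Rₙ`: `Sum.inl (i, j)` is the clique vertex `c(i+1, j+1)` and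
`Sum.inr (i, j)` is the independent-set vertex `s(i+1, j+1)`; the `c`-vertices form a
clique, the `s`-vertices form an independent set, and `s(u₁,v₁) ~ c(u₂,v₂)` iff
`u₁ > u₂` or (`u₁ = u₂` and `v₁ = v₂`). -/
def stackedPath (n : ℕ) : SimpleGraph ((Fin n × Fin 2) ⊕ (Fin n × Fin 2)) where
  Adj a b :=
    match a, b with
    | Sum.inl c₁, Sum.inl c₂ => c₁ ≠ c₂
    | Sum.inl c, Sum.inr s => c.1 < s.1 ∨ (s.1 = c.1 ∧ s.2 = c.2)
    | Sum.inr s, Sum.inl c => c.1 < s.1 ∨ (s.1 = c.1 ∧ s.2 = c.2)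
    | Sum.inr _, Sum.inr _ => False
  symm := by constructor; rintro (a | a) (b | b) h <;> first | exact h.symm | exact h
  loopless := by
    constructor
    rintro (a | a) h
    · exact h rfl
    · exact h

/-!
`Rₙ` is a split graph: the `c`-vertices form a clique `K` and the `s`-vertices the independent
set `Kᶜ`; how the two sides are joined plays no role. In a split graph every edge has an end in
`K`, so an induced `2K₂` would contain two vertices of `K` on different edges, and these are
adjacent. Complementation preserves split graphs (swapping `K` and `Kᶜ`) and turns an induced
copy of the complement of `2K₂` into an induced `2K₂`.
-/

namespace SimpleGraph

variable {V : Type*} {G : SimpleGraph V} {K : Set V}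

/-- `K` and `Kᶜ` exhibit `G` as a split graph. -/
def IsSplitPartition (G : SimpleGraph V) (K : Set V) : Prop :=
  G.IsClique K ∧ G.IsIndepSet Kᶜ

theorem IsSplitPartition.compl (h : G.IsSplitPartition K) : Gᶜ.IsSplitPartition Kᶜ :=
  ⟨G.isClique_compl.2 h.2, by simpa only [isIndepSet_compl, compl_compl] using h.1⟩

theorem IsSplitPartition.isEmpty_matchingGraph_embedding (h : G.IsSplitPartition K) :
    IsEmpty (matchingGraph 2 ↪g G) := by
  refine ⟨fun e => ?_⟩
  have edge_meets_clique (i : Fin 2) : ∃ j, e (i, j) ∈ K :=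
    (isIndepSet_compl_iff_isVertexCover.1 h.2
        (e.map_adj_iff (v := (i, 0)) (w := (i, 1)) |>.2 ⟨rfl, zero_ne_one⟩)).elim
      (⟨0, ·⟩) (⟨1, ·⟩)
  obtain ⟨j₀, hj₀⟩ := edge_meets_clique 0
  obtain ⟨j₁, hj₁⟩ := edge_meets_clique 1
  have hne : e (0, j₀) ≠ e (1, j₁) := e.injective.ne (by simp)
  exact zero_ne_one (e.map_adj_iff.1 (h.1 hj₀ hj₁ hne)).1

theorem IsSplitPartition.isEmpty_compl_matchingGraph_embedding (h : G.IsSplitPartition K) :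
    IsEmpty ((matchingGraph 2)ᶜ ↪g G) := by
  have := h.compl.isEmpty_matchingGraph_embedding
  rw [← compl_compl G]
  exact Embedding.complEquiv.symm.isEmpty

end SimpleGraph

theorem stackedPath_isSplitPartition (n : ℕ) :
    (stackedPath n).IsSplitPartition (Set.range Sum.inl) := by
  constructor
  · rintro _ ⟨c, rfl⟩ _ ⟨d, rfl⟩ hcd
    exact ne_of_apply_ne Sum.inl hcd
  · rw [Set.compl_range_inl]
    rintro _ ⟨s, rfl⟩ _ ⟨t, rfl⟩ - hst
    exact hst

theorem stackedPath_no_matching_no_comatching_general (n : ℕ) :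
    IsEmpty (matchingGraph 2 ↪g stackedPath n) ∧
      IsEmpty ((matchingGraph 2)ᶜ ↪g stackedPath n) :=
  ⟨(stackedPath_isSplitPartition n).isEmpty_matchingGraph_embedding,
    (stackedPath_isSplitPartition n).isEmpty_compl_matchingGraph_embedding⟩

/-- For every positive integer `n`, the stacked path `Rₙ` contains no induced
copy of `2K₂` and no induced copy of the complement of `2K₂`. -/
theorem stackedPath_no_matching_no_comatching (n : ℕ) (hn : 0 < n) :
    IsEmpty (matchingGraph 2 ↪g stackedPath n) ∧
      IsEmpty ((matchingGraph 2)ᶜ ↪g stackedPath n) :=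
  stackedPath_no_matching_no_comatching_general n
end

section
/- The stacked path R₂ has no 4-lettering in which s(1,1) and s(2,1) are encoded by the same letter, c(1,1) and c(2,1) are encoded by the same letter, c(1,2) and c(2,2) are encoded by the same letter, and s(1,2) and s(2,2) are encoded by the same letter. -/
/-! In a lettering, the adjacency of two distinct vertices is determined by their letters and
by which of them comes first. So an adjacent and a non-adjacent pair carrying the same two
letters in the same roles are ordered in opposite directions. In `R₂` each of the four products
`{s(1,j), s(2,j)} × {c(1,j'), c(2,j')}` of letter classes contains one or three adjacent pairs,
which forces its four vertices into an alternating chain. All four chains put row 2 before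
row 1, or all put row 1 before row 2, since any two of them share a letter class; in the first
case they contain the cycle `s(2,1) < c(2,1) < s(2,2) < c(2,2) < s(2,1)`, and symmetrically in
the second. -/

instance stackedPath.instDecidableRelAdj (n : ℕ) : DecidableRel (stackedPath n).Adj :=
  fun a b =>
    match a, b with
    | Sum.inl c₁, Sum.inl c₂ => inferInstanceAs (Decidable (c₁ ≠ c₂))
    | Sum.inl c, Sum.inr s => inferInstanceAs (Decidable (c.1 < s.1 ∨ (s.1 = c.1 ∧ s.2 = c.2)))
    | Sum.inr s, Sum.inl c => inferInstanceAs (Decidable (c.1 < s.1 ∨ (s.1 = c.1 ∧ s.2 = c.2)))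
    | Sum.inr _, Sum.inr _ => inferInstanceAs (Decidable False)

namespace SimpleGraph

variable {V α : Type*} {G : SimpleGraph V}

structure IsLettering (G : SimpleGraph V) (D : Set (α × α)) (L : V → α) (ord : V → ℕ) :
    Prop where
  injective : Function.Injective ord
  adj_iff : ∀ u v, u ≠ v → ord u < ord v → (G.Adj u v ↔ (L u, L v) ∈ D)

namespace IsLettering

variable {D : Set (α × α)} {L : V → α} {ord : V → ℕ}

theorem lt_iff_gt_of_adj_of_not_adj (h : G.IsLettering D L ord) {u v u' v' : V}
    (hadj : G.Adj u v) (hnadj : ¬G.Adj u' v') (hne : u' ≠ v') (hu : L u = L u')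
    (hv : L v = L v') : ord u < ord v ↔ ord v' < ord u' := by
  constructor
  · intro hlt
    have hmem : (L u', L v') ∈ D := hu ▸ hv ▸ (h.adj_iff u v hadj.ne hlt).mp hadj
    refine (h.injective.ne hne).lt_or_gt.resolve_left fun hlt' => hnadj ?_
    exact (h.adj_iff u' v' hne hlt').mpr hmem
  · intro hlt'
    have hnmem : (L v, L u) ∉ D := hu ▸ hv ▸ fun hmem =>
      hnadj ((h.adj_iff v' u' hne.symm hlt').mpr hmem).symm
    refine (h.injective.ne hadj.ne).lt_or_gt.resolve_right fun hlt => hnmem ?_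
    exact (h.adj_iff v u hadj.ne.symm hlt).mp hadj.symm

theorem lt_chain_of_three_adj (h : G.IsLettering D L ord) {s s' c c' : V}
    (hs : L s = L s') (hc : L c = L c') (hsc : G.Adj s c) (hs'c : G.Adj s' c)
    (hs'c' : G.Adj s' c') (hsc' : ¬G.Adj s c') (hne_sc' : s ≠ c') :
    (ord s' < ord c' ∧ ord c' < ord s ∧ ord s < ord c) ∨
      (ord c < ord s ∧ ord s < ord c' ∧ ord c' < ord s') := by
  have h₁ := h.lt_iff_gt_of_adj_of_not_adj hsc hsc' hne_sc' rfl hc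
  have h₂ := h.lt_iff_gt_of_adj_of_not_adj hs'c hsc' hne_sc' hs.symm hc
  have h₃ := h.lt_iff_gt_of_adj_of_not_adj hs'c' hsc' hne_sc' hs.symm rfl
  have := h.injective.ne hsc.ne
  have := h.injective.ne hs'c.ne
  have := h.injective.ne hs'c'.ne
  have := h.injective.ne hne_sc'
  omega

theorem lt_chain_of_one_adj (h : G.IsLettering D L ord) {s s' c c' : V}
    (hs : L s = L s') (hc : L c = L c') (hs'c : G.Adj s' c) (hsc : ¬G.Adj s c)
    (hsc' : ¬G.Adj s c') (hs'c' : ¬G.Adj s' c') (hne_sc : s ≠ c) (hne_sc' : s ≠ c')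
    (hne_s'c' : s' ≠ c') :
    (ord c' < ord s' ∧ ord s' < ord c ∧ ord c < ord s) ∨
      (ord s < ord c ∧ ord c < ord s' ∧ ord s' < ord c') := by
  have h₁ := h.lt_iff_gt_of_adj_of_not_adj hs'c hsc hne_sc hs.symm rfl
  have h₂ := h.lt_iff_gt_of_adj_of_not_adj hs'c hsc' hne_sc' hs.symm hc
  have h₃ := h.lt_iff_gt_of_adj_of_not_adj hs'c hs'c' hne_s'c' rfl hc
  have := h.injective.ne hs'c.ne
  have := h.injective.ne hne_sc
  have := h.injective.ne hne_sc'
  have := h.injective.ne hne_s'c'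
  omega

end IsLettering

end SimpleGraph

/-- The stacked path `R₂` has no `4`-lettering in which `s(1,1), s(2,1)` get the
same letter, `c(1,1), c(2,1)` get the same letter, `c(1,2), c(2,2)` get the same
letter, and `s(1,2), s(2,2)` get the same letter. -/
theorem stackedPath_two_no_uniform_lettering :
    ¬ ∃ (D : Set (Fin 4 × Fin 4)) (L : (Fin 2 × Fin 2) ⊕ (Fin 2 × Fin 2) → Fin 4)
      (ord : (Fin 2 × Fin 2) ⊕ (Fin 2 × Fin 2) → ℕ),
      Function.Injective ord ∧
      (∀ u v, u ≠ v → ord u < ord v → ((stackedPath 2).Adj u v ↔ (L u, L v) ∈ D)) ∧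
      L (Sum.inr (0, 0)) = L (Sum.inr (1, 0)) ∧
      L (Sum.inl (0, 0)) = L (Sum.inl (1, 0)) ∧
      L (Sum.inl (0, 1)) = L (Sum.inl (1, 1)) ∧
      L (Sum.inr (0, 1)) = L (Sum.inr (1, 1)) := by
  rintro ⟨D, L, ord, hinj, hadj, hs₁, hc₁, hc₂, hs₂⟩
  have h : (stackedPath 2).IsLettering D L ord := ⟨hinj, hadj⟩
  have hs₁c₁ := h.lt_chain_of_three_adj hs₁ hc₁ (by decide) (by decide) (by decide)
    (by decide) (by decide)
  have hs₂c₂ := h.lt_chain_of_three_adj hs₂ hc₂ (by decide) (by decide) (by decide)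
    (by decide) (by decide)
  have hs₁c₂ := h.lt_chain_of_one_adj hs₁ hc₂ (by decide) (by decide) (by decide)
    (by decide) (by decide) (by decide) (by decide)
  have hs₂c₁ := h.lt_chain_of_one_adj hs₂ hc₁ (by decide) (by decide) (by decide)
    (by decide) (by decide) (by decide) (by decide)
  omega
end

section
/- The family of stacked paths has unbounded lettericity: for every positive integer k there exists a positive integer n such that the stacked path R_n has no k-lettering. -/
/-!
Two rows `i < j` of `Rₙ` carrying the same four letters cannot coexist in a lettering. For each
pair of letter classes `{s(i,t), s(j,t)}` and `{c(i,t'), c(j,t')}` exactly one of the four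
cross pairs differs in adjacency from the other three, and since the decoder sees only the
letters and the order, that pair is oriented against the other three. This pins the four
vertices into a monotone chain, and the four chains obtained from the choices of `t` and `t'`
close up into a cycle. So the `k⁴ + 1` rows of `R_{k⁴+1}` would need pairwise distinct letter
quadruples, which do not exist.
-/

def IsLettering_s11 {V : Type*} {k : ℕ} (G : SimpleGraph V) (D : Set (Fin k × Fin k))
    (L : V → Fin k) (ord : V → ℕ) : Prop :=
  Function.Injective ord ∧ ∀ u v : V, u ≠ v → ord u < ord v → (G.Adj u v ↔ (L u, L v) ∈ D)

namespace IsLettering_s11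

variable {V : Type*} {G : SimpleGraph V} {k : ℕ} {D : Set (Fin k × Fin k)} {L : V → Fin k}
  {ord : V → ℕ} {u v u' v' : V}

theorem lt_of_lt_of_not_adj_iff (h : IsLettering_s11 G D L ord) (hu : L u = L u')
    (hv : L v = L v') (huv' : u' ≠ v') (hadj : ¬(G.Adj u v ↔ G.Adj u' v'))
    (huv : ord u < ord v) : ord v' < ord u' := by
  refine (lt_or_gt_of_ne (h.1.ne huv')).resolve_left fun huv'_lt => hadj ?_
  rw [h.2 u v (fun e => huv.ne (congrArg ord e)) huv, h.2 u' v' huv' huv'_lt, hu, hv]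

theorem lt_iff_lt_of_not_adj_iff (h : IsLettering_s11 G D L ord) (hu : L u = L u')
    (hv : L v = L v') (huv : u ≠ v) (huv' : u' ≠ v') (hadj : ¬(G.Adj u v ↔ G.Adj u' v')) :
    ord u < ord v ↔ ord v' < ord u' := by
  refine ⟨h.lt_of_lt_of_not_adj_iff hu hv huv' hadj, fun hvu' => ?_⟩
  refine (lt_or_gt_of_ne (h.1.ne huv)).resolve_right fun hvu => ?_
  have hadj' : ¬(G.Adj v u ↔ G.Adj v' u') := by rwa [G.adj_comm v, G.adj_comm v']
  exact (h.lt_of_lt_of_not_adj_iff hv hu huv'.symm hadj' hvu).asymm hvu'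

theorem chain_of_odd_pair (h : IsLettering_s11 G D L ord) (hu : L u = L u') (hv : L v = L v')
    (huv : u ≠ v) (huv' : u ≠ v') (hu'v' : u' ≠ v')
    (hodd : ¬(G.Adj u v' ↔ G.Adj u v)) (hodd' : ¬(G.Adj u v' ↔ G.Adj u' v')) :
    (ord v < ord u ∧ ord u < ord v' ∧ ord v' < ord u') ∨
      (ord u' < ord v' ∧ ord v' < ord u ∧ ord u < ord v) := by
  have hv_lt := h.lt_iff_lt_of_not_adj_iff rfl hv.symm huv' huv hodd
  have hu'_lt := h.lt_iff_lt_of_not_adj_iff hu rfl huv' hu'v' hodd'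
  rcases lt_or_gt_of_ne (h.1.ne huv') with hlt | hlt
  · exact .inl ⟨hv_lt.mp hlt, hlt, hu'_lt.mp hlt⟩
  · have := h.1.ne huv
    have := h.1.ne hu'v'
    omega

end IsLettering_s11

@[simp]
theorem stackedPath_adj_inr_inl {n : ℕ} (s c : Fin n × Fin 2) :
    (stackedPath n).Adj (Sum.inr s) (Sum.inl c) ↔ c.1 < s.1 ∨ s.1 = c.1 ∧ s.2 = c.2 :=
  Iff.rfl

def rowLetters {n k : ℕ} (L : (Fin n × Fin 2) ⊕ (Fin n × Fin 2) → Fin k) (i : Fin n) :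
    Fin 2 ⊕ Fin 2 → Fin k :=
  fun x => L (Sum.map (i, ·) (i, ·) x)

namespace IsLettering_s11

variable {n k : ℕ} {D : Set (Fin k × Fin k)} {L : (Fin n × Fin 2) ⊕ (Fin n × Fin 2) → Fin k}
  {ord : (Fin n × Fin 2) ⊕ (Fin n × Fin 2) → ℕ}

theorem rowLetters_ne_of_lt (h : IsLettering_s11 (stackedPath n) D L ord) {i j : Fin n}
    (hij : i < j) : rowLetters L i ≠ rowLetters L j := by
  intro hrow
  have hc (t : Fin 2) : L (.inl (i, t)) = L (.inl (j, t)) := congrFun hrow (.inl t)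
  have hs (t : Fin 2) : L (.inr (i, t)) = L (.inr (j, t)) := congrFun hrow (.inr t)
  have hdiag (t : Fin 2) := h.chain_of_odd_pair (hs t) (hc t)
    (u := .inr (i, t)) (v := .inl (i, t)) (v' := .inl (j, t)) (u' := .inr (j, t))
    (by simp) (by simp) (by simp) (by simp [hij.not_gt, hij.ne]) (by simp [hij.not_gt, hij.ne])
  have hcross (t t' : Fin 2) (htt' : t ≠ t') := h.chain_of_odd_pair (hs t).symm (hc t').symm
    (u := .inr (j, t)) (v := .inl (j, t')) (v' := .inl (i, t')) (u' := .inr (i, t))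
    (by simp) (by simp) (by simp) (by simp [hij, htt']) (by simp [hij, htt'])
  -- The chains force `s(j,0) < c(j,0) < s(j,1) < c(j,1) < s(j,0)` or the same cycle in row `i`.
  have := hdiag 0
  have := hdiag 1
  have := hcross 0 1 (by decide)
  have := hcross 1 0 (by decide)
  omega

theorem rowLetters_injective (h : IsLettering_s11 (stackedPath n) D L ord) :
    Function.Injective (rowLetters L) := by
  intro i j hrow
  by_contra hne
  rcases lt_or_gt_of_ne hne with hij | hji
  · exact h.rowLetters_ne_of_lt hij hrow
  · exact h.rowLetters_ne_of_lt hji hrow.symm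

end IsLettering_s11

/-- The family of stacked paths has unbounded lettericity: for every `k` there
is a stacked path with no `k`-lettering. -/
theorem stackedPath_unbounded_lettericity (k : ℕ) :
    ∃ n : ℕ, 0 < n ∧ ¬ HasLettering (stackedPath n) k := by
  refine ⟨k ^ 4 + 1, Nat.succ_pos _, ?_⟩
  rintro ⟨D, L, ord, h⟩
  have hcard := Fintype.card_le_of_injective _ (IsLettering_s11.rowLetters_injective h)
  simp at hcard
end

section
/- For every finite simple graph G on at least two vertices, there exists a prime graph H on at least two vertices and a family of nonempty graphs (G_v : v ∈ V(H)) such that G is isomorphic to the inflation H[G_v : v ∈ V(H)]; moreover, H is unique up to isomorphism (any two prime graphs H, H' on at least two vertices for which G is an inflation of H and of H' are isomorphic). -/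
/-- `M` is a module of `G`: every vertex outside `M` is adjacent to all of `M`
or to none of `M`. -/
def IsModule {V : Type*} (G : SimpleGraph V) (M : Set V) : Prop :=
  ∀ u ∈ M, ∀ v ∈ M, ∀ w ∉ M, (G.Adj w u ↔ G.Adj w v)

/-- A graph is prime if its only modules are the improper ones: the empty set,
singletons, and the whole vertex set. -/
def IsPrimeGraph {V : Type*} (G : SimpleGraph V) : Prop :=
  ∀ M : Set V, IsModule G M → M = ∅ ∨ (∃ x, M = {x}) ∨ M = Set.univ

/-- `G` is (isomorphic to) the inflation `H[G_v : v ∈ V(H)]`, witnessed by the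
surjection `φ` sending each vertex of `G` to the vertex of `H` it inflates:
the (nonempty) graphs `G_v` are the induced subgraphs on the fibers of `φ`,
and between different fibers the adjacency is governed by `H`. -/
def IsInflation {V U : Type*} (G : SimpleGraph V) (H : SimpleGraph U) (φ : V → U) : Prop :=
  Function.Surjective φ ∧ ∀ u v : V, φ u ≠ φ v → (G.Adj u v ↔ H.Adj (φ u) (φ v))

open Classical Set

namespace ModDecomp

def SplitBot {V : Type*} (G : SimpleGraph V) : Prop :=
  ∃ A : Set V, A.Nonempty ∧ Aᶜ.Nonempty ∧ ∀ a ∈ A, ∀ b ∈ Aᶜ, ¬ G.Adj a b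

def SplitTop {V : Type*} (G : SimpleGraph V) : Prop :=
  ∃ A : Set V, A.Nonempty ∧ Aᶜ.Nonempty ∧ ∀ a ∈ A, ∀ b ∈ Aᶜ, G.Adj a b

def MaxMod {V : Type*} (G : SimpleGraph V) (P : Set V) : Prop :=
  IsModule G P ∧ P ≠ Set.univ ∧ ∀ Q, IsModule G Q → Q ≠ Set.univ → P ⊆ Q → Q = P

variable {V : Type*} {G : SimpleGraph V} {M N P Q : Set V}

lemma isModule_singleton (x : V) : IsModule G {x} := by
  intro u hu v hv w _
  rw [Set.mem_singleton_iff] at hu hv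
  subst hu; subst hv; rfl

lemma isModule_union (hM : IsModule G M) (hN : IsModule G N)
    (h : (M ∩ N).Nonempty) : IsModule G (M ∪ N) := by
  obtain ⟨z, hzM, hzN⟩ := h
  intro u hu v hv w hw
  have hwM : w ∉ M := fun h => hw (Or.inl h)
  have hwN : w ∉ N := fun h => hw (Or.inr h)
  have key : ∀ a ∈ M ∪ N, (G.Adj w a ↔ G.Adj w z) := by
    intro a ha
    rcases ha with ha | ha
    · exact hM a ha z hzM w hwM
    · exact hN a ha z hzN w hwN
  exact (key u hu).trans (key v hv).symm

lemma isModule_inter (hM : IsModule G M) (hN : IsModule G N) :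
    IsModule G (M ∩ N) := by
  intro u hu v hv w hw
  by_cases hwM : w ∈ M
  · have hwN : w ∉ N := fun h => hw ⟨hwM, h⟩
    exact hN u hu.2 v hv.2 w hwN
  · exact hM u hu.1 v hv.1 w hwM

lemma isModule_diff (hM : IsModule G M) (hN : IsModule G N)
    (hb : (N \ M).Nonempty) : IsModule G (M \ N) := by
  obtain ⟨b, hbN, hbM⟩ := hb
  intro u hu v hv w hw
  by_cases hwM : w ∈ M
  · have hwN : w ∈ N := by
      by_contra hwN
      exact hw ⟨hwM, hwN⟩
    have h1 : G.Adj u w ↔ G.Adj u b := hN w hwN b hbN u hu.2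
    have h2 : G.Adj v w ↔ G.Adj v b := hN w hwN b hbN v hv.2
    have h3 : G.Adj b u ↔ G.Adj b v := hM u hu.1 v hv.1 b hbM
    rw [G.adj_comm w u, G.adj_comm w v, h1, h2, G.adj_comm u b, G.adj_comm v b, h3]
  · exact hM u hu.1 v hv.1 w hwM

lemma isModule_symmDiff (hM : IsModule G M) (hN : IsModule G N)
    (hMN : (M ∩ N).Nonempty) (hD1 : (M \ N).Nonempty) (hD2 : (N \ M).Nonempty) :
    IsModule G ((M \ N) ∪ (N \ M)) := by
  obtain ⟨z, hzM, hzN⟩ := hMN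
  have mixed : ∀ a ∈ M \ N, ∀ b ∈ N \ M, ∀ w, w ∈ M → w ∈ N →
      (G.Adj w a ↔ G.Adj w b) := by
    intro a ha b hb w hwM hwN
    have h1 : G.Adj a w ↔ G.Adj a b := hN w hwN b hb.1 a ha.2
    have h2 : G.Adj b w ↔ G.Adj b a := hM w hwM a ha.1 b hb.2
    rw [G.adj_comm w a, h1, G.adj_comm a b, ← h2, G.adj_comm b w]
  intro u hu v hv w hw
  have hw1 : w ∉ M \ N := fun h => hw (Or.inl h)
  have hw2 : w ∉ N \ M := fun h => hw (Or.inr h)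
  by_cases hwM : w ∈ M
  · have hwN : w ∈ N := by
      by_contra hwN; exact hw1 ⟨hwM, hwN⟩
    rcases hu with hu | hu <;> rcases hv with hv | hv
    · exact isModule_diff hM hN hD2 u hu v hv w hw1
    · exact mixed u hu v hv w hwM hwN
    · exact ((mixed v hv u hu w hwM hwN).symm)
    · exact isModule_diff hN hM hD1 u hu v hv w hw2
  · have hwN : w ∉ N := fun h => hw2 ⟨h, hwM⟩
    have key : ∀ a, a ∈ (M \ N) ∪ (N \ M) → (G.Adj w a ↔ G.Adj w z) := by
      intro a ha
      rcases ha with ha | ha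
      · exact hM a ha.1 z hzM w hwM
      · exact hN a ha.1 z hzN w hwN
    exact (key u hu).trans (key v hv).symm

lemma split_of_compl_modules (hA : IsModule G P) (hB : IsModule G Pᶜ)
    (hAne : P.Nonempty) (hBne : Pᶜ.Nonempty) : SplitBot G ∨ SplitTop G := by
  obtain ⟨a₀, ha₀⟩ := hAne
  obtain ⟨b₀, hb₀⟩ := hBne
  have const : ∀ a ∈ P, ∀ b ∈ Pᶜ, (G.Adj a b ↔ G.Adj a₀ b₀) := by
    intro a ha b hb
    have h1 : G.Adj b a ↔ G.Adj b a₀ := hA a ha a₀ ha₀ b hb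
    have h2 : G.Adj a₀ b ↔ G.Adj a₀ b₀ := hB b hb b₀ hb₀ a₀ (by simp [ha₀])
    rw [G.adj_comm a b, h1, G.adj_comm b a₀, h2]
  by_cases hε : G.Adj a₀ b₀
  · exact Or.inr ⟨P, ⟨a₀, ha₀⟩, ⟨b₀, hb₀⟩, fun a ha b hb => (const a ha b hb).mpr hε⟩
  · exact Or.inl ⟨P, ⟨a₀, ha₀⟩, ⟨b₀, hb₀⟩, fun a ha b hb h => hε ((const a ha b hb).mp h)⟩

end ModDecomp

namespace ModDecomp

variable {V : Type*} {G : SimpleGraph V} {M N P Q : Set V}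

lemma overlap_contradiction (h1 : ¬ SplitBot G) (h2 : ¬ SplitTop G)
    (hP : IsModule G P) (hN : IsModule G N) (hi : (P ∩ N).Nonempty)
    (hPN : (P \ N).Nonempty) (hNP : (N \ P).Nonempty) (hU : P ∪ N = Set.univ) :
    False := by
  have hcompl : (P ∩ N)ᶜ = (P \ N) ∪ (N \ P) := by
    ext w
    have hw : w ∈ P ∨ w ∈ N := by
      have : w ∈ P ∪ N := hU ▸ Set.mem_univ w
      exact this
    simp only [Set.mem_compl_iff, Set.mem_inter_iff, Set.mem_union, Set.mem_diff]
    tauto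
  have hmod2 : IsModule G ((P ∩ N)ᶜ) := by
    rw [hcompl]; exact isModule_symmDiff hP hN hi hPN hNP
  have hne2 : ((P ∩ N)ᶜ).Nonempty := by
    rw [hcompl]
    obtain ⟨a, ha⟩ := hPN
    exact ⟨a, Or.inl ha⟩
  rcases split_of_compl_modules (isModule_inter hP hN) hmod2 hi hne2 with h | h
  · exact h1 h
  · exact h2 h

lemma exists_maxmod [Finite V] (hM : IsModule G M) (hMu : M ≠ Set.univ) :
    ∃ P, M ⊆ P ∧ MaxMod G P := by
  have hfin : {P : Set V | IsModule G P ∧ P ≠ Set.univ ∧ M ⊆ P}.Finite := Set.toFinite _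
  obtain ⟨P, hPmem, hPmax⟩ := Set.Finite.exists_maximalFor id _ hfin ⟨M, hM, hMu, le_refl M⟩
  refine ⟨P, hPmem.2.2, hPmem.1, hPmem.2.1, ?_⟩
  intro Q hQ hQu hPQ
  exact Set.Subset.antisymm (hPmax ⟨hQ, hQu, hPmem.2.2.trans hPQ⟩ hPQ) hPQ

lemma maxmod_eq (h1 : ¬ SplitBot G) (h2 : ¬ SplitTop G)
    (hP : MaxMod G P) (hQ : MaxMod G Q) (h : (P ∩ Q).Nonempty) : P = Q := by
  have hU : IsModule G (P ∪ Q) := isModule_union hP.1 hQ.1 h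
  by_cases hPQ : (P \ Q).Nonempty
  · by_cases hQP : (Q \ P).Nonempty
    · by_cases huniv : P ∪ Q = Set.univ
      · exact absurd (overlap_contradiction h1 h2 hP.1 hQ.1 h hPQ hQP huniv) (fun x => x)
      · have := hP.2.2 (P ∪ Q) hU huniv Set.subset_union_left
        have hQP' : Q ⊆ P := by
          rw [← this]; exact Set.subset_union_right
        exact hQ.2.2 P hP.1 hP.2.1 hQP'
    · have : Q ⊆ P := by
        rw [Set.not_nonempty_iff_eq_empty, Set.diff_eq_empty] at hQP
        exact hQP
      exact hQ.2.2 P hP.1 hP.2.1 this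
  · have : P ⊆ Q := by
      rw [Set.not_nonempty_iff_eq_empty, Set.diff_eq_empty] at hPQ
      exact hPQ
    exact (hP.2.2 Q hQ.1 hQ.2.1 this).symm

end ModDecomp

namespace ModDecomp

variable {V U : Type*} {G : SimpleGraph V} {H : SimpleGraph U} {φ : V → U} {M N P Q : Set V}

lemma fiber_isModule (hi : IsInflation G H φ) (u : U) : IsModule G (φ ⁻¹' {u}) := by
  intro a ha b hb w hw
  simp only [Set.mem_preimage, Set.mem_singleton_iff] at ha hb hw
  have h1 : G.Adj w a ↔ H.Adj (φ w) u := by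
    rw [← ha]; exact hi.2 w a (by rw [ha]; exact hw)
  have h2 : G.Adj w b ↔ H.Adj (φ w) u := by
    rw [← hb]; exact hi.2 w b (by rw [hb]; exact hw)
  rw [h1, h2]

lemma preimage_isModule (hi : IsInflation G H φ) {S : Set U} (hS : IsModule H S) :
    IsModule G (φ ⁻¹' S) := by
  intro a ha b hb w hw
  simp only [Set.mem_preimage] at ha hb hw
  by_cases hab : φ a = φ b
  · rw [hi.2 w a (fun h => hw (h ▸ ha)), hi.2 w b (fun h => hw (h ▸ hb)), hab]
  · rw [hi.2 w a (fun h => hw (h ▸ ha)), hi.2 w b (fun h => hw (h ▸ hb))]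
    exact hS (φ a) ha (φ b) hb (φ w) hw

lemma image_isModule (hi : IsInflation G H φ) (hP : IsModule G P) :
    IsModule H (φ '' P) := by
  intro u hu v hv w hw
  obtain ⟨pu, hpu, rfl⟩ := hu
  obtain ⟨pv, hpv, rfl⟩ := hv
  obtain ⟨x, rfl⟩ := hi.1 w
  have hx : x ∉ P := fun h => hw ⟨x, h, rfl⟩
  have h1 : G.Adj x pu ↔ H.Adj (φ x) (φ pu) := hi.2 x pu (fun h => hw (h ▸ ⟨pu, hpu, rfl⟩))
  have h2 : G.Adj x pv ↔ H.Adj (φ x) (φ pv) := hi.2 x pv (fun h => hw (h ▸ ⟨pv, hpv, rfl⟩))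
  rw [← h1, ← h2]
  exact hP pu hpu pv hpv x hx

lemma isModule_compl_graph (hM : IsModule G M) : IsModule Gᶜ M := by
  intro u hu v hv w hw
  have hu' : w ≠ u := fun h => hw (h ▸ hu)
  have hv' : w ≠ v := fun h => hw (h ▸ hv)
  simp only [SimpleGraph.compl_adj]
  rw [hM u hu v hv w hw]
  tauto

lemma isPrimeGraph_compl (h : IsPrimeGraph G) : IsPrimeGraph Gᶜ := by
  intro M hM
  exact h M (by simpa using isModule_compl_graph (G := Gᶜ) hM)

lemma isInflation_compl (hi : IsInflation G H φ) : IsInflation Gᶜ Hᶜ φ := by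
  refine ⟨hi.1, fun u v huv => ?_⟩
  have hne : u ≠ v := fun h => huv (h ▸ rfl)
  simp only [SimpleGraph.compl_adj]
  rw [hi.2 u v huv]
  tauto

lemma isPrime_two (H : SimpleGraph (Fin 2)) : IsPrimeGraph H := by
  intro M _
  have htwo : ∀ z : Fin 2, z = 0 ∨ z = 1 := by omega
  by_cases h0 : (0 : Fin 2) ∈ M <;> by_cases h1 : (1 : Fin 2) ∈ M
  · right; right
    ext z
    rcases htwo z with rfl | rfl <;> simp [h0, h1]
  · right; left
    refine ⟨0, ?_⟩
    ext z
    rcases htwo z with rfl | rfl <;> simp [h0, h1]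
  · right; left
    refine ⟨1, ?_⟩
    ext z
    rcases htwo z with rfl | rfl <;> simp [h0, h1]
  · left
    ext z
    rcases htwo z with rfl | rfl <;> simp [h0, h1]

lemma iso_of_two {k' : ℕ} (K : SimpleGraph (Fin 2)) (H' : SimpleGraph (Fin k'))
    (s t : Fin k') (hst : s ≠ t) (hall : ∀ z, z = s ∨ z = t) (c : Prop)
    (hK : ∀ i j, K.Adj i j ↔ (i ≠ j ∧ c)) (hH : ∀ z w, H'.Adj z w ↔ (z ≠ w ∧ c)) :
    Nonempty (K ≃g H') := by
  have htwo : ∀ z : Fin 2, z = 0 ∨ z = 1 := by omega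
  refine ⟨⟨⟨fun i => if i = 0 then s else t, fun z => if z = s then 0 else 1, ?_, ?_⟩, ?_⟩⟩
  · intro i
    rcases htwo i with rfl | rfl <;> simp [hst, hst.symm]
  · intro z
    rcases hall z with rfl | rfl
    · simp
    · simp [Ne.symm hst, hst]
  · intro i j
    simp only [Equiv.coe_fn_mk]
    rw [hK, hH]
    constructor
    · rintro ⟨hne, hc⟩
      refine ⟨fun h => hne ?_, hc⟩
      rcases htwo i with rfl | rfl <;> rcases htwo j with rfl | rfl <;>
        simp_all
    · rintro ⟨hne, hc⟩
      refine ⟨fun h => hne ?_, hc⟩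
      rcases htwo i with rfl | rfl <;> rcases htwo j with rfl | rfl <;>
        simp_all

end ModDecomp

namespace ModDecomp

variable {V : Type*} {G : SimpleGraph V}

lemma split_bot_classify {k' : ℕ} (A : Set V) (hA1 : A.Nonempty) (hA2 : Aᶜ.Nonempty)
    (hA3 : ∀ a ∈ A, ∀ b ∈ Aᶜ, ¬ G.Adj a b)
    (H' : SimpleGraph (Fin k')) (φ' : V → Fin k')
    (hp : IsPrimeGraph H') (hi : IsInflation G H' φ') (hk : 2 ≤ k') :
    ∃ s t : Fin k', s ≠ t ∧ (∀ z, z = s ∨ z = t) ∧ ∀ z w, ¬ H'.Adj z w := by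
  have hcross : ∀ x y, x ∈ A → y ∉ A → ¬ G.Adj x y := fun x y hx hy => hA3 x hx y hy
  -- if H'.Adj u v and some x in fiber u is in A, then the whole fiber of v is in A
  have hb : ∀ u v, H'.Adj u v → ∀ x, φ' x = u → x ∈ A → ∀ y, φ' y = v → y ∈ A := by
    intro u v hadj x hx hxA y hy
    by_contra hyA
    have hne : φ' x ≠ φ' y := by rw [hx, hy]; exact H'.ne_of_adj hadj
    have : G.Adj x y := (hi.2 x y hne).mpr (by rw [hx, hy]; exact hadj)
    exact hcross x y hxA hyA this
  set T : Set (Fin k') := {u | ∃ x, φ' x = u ∧ x ∈ A} with hT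
  have hTc : ∀ u ∈ T, ∀ v ∉ T, ¬ H'.Adj u v := by
    intro u hu v hv hadj
    obtain ⟨x, hx, hxA⟩ := hu
    obtain ⟨y, hy⟩ := hi.1 v
    exact hv ⟨y, hy, hb u v hadj x hx hxA y hy⟩
  by_cases hTu : ∀ v, v ∈ T
  · -- T = univ : the fiber of a point outside A gives an isolated vertex
    obtain ⟨y, hyA⟩ := hA2
    set u := φ' y with hu
    have hiso : ∀ v, ¬ H'.Adj v u := by
      intro v hadj
      obtain ⟨x, hx, hxA⟩ := hTu v
      exact hyA (hb v u hadj x hx hxA y rfl)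
    have hmod : IsModule H' ({u}ᶜ) := by
      intro a _ b _ w hw
      have hwu : w = u := by simpa using hw
      subst hwu
      exact iff_of_false (fun h => hiso a h.symm) (fun h => hiso b h.symm)
    rcases hp _ hmod with h | ⟨s', hs'⟩ | h
    · obtain ⟨v, hv⟩ := Fintype.exists_ne_of_one_lt_card (by rw [Fintype.card_fin]; omega) u
      have : v ∈ ({u}ᶜ : Set (Fin k')) := hv
      rw [h] at this
      simpa using this
    · have hs'u : s' ≠ u := by
        have : s' ∈ ({u}ᶜ : Set (Fin k')) := hs' ▸ rfl
        simpa using this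
      refine ⟨u, s', hs'u.symm, ?_, ?_⟩
      · intro z
        by_cases hz : z = u
        · exact Or.inl hz
        · right
          have : z ∈ ({u}ᶜ : Set (Fin k')) := hz
          rw [hs'] at this
          exact this
      · intro z w hadj
        have hz : z = u ∨ z = s' := by
          by_cases h' : z = u
          · exact Or.inl h'
          · right; have : z ∈ ({u}ᶜ : Set (Fin k')) := h'
            rw [hs'] at this; exact this
        have hw : w = u ∨ w = s' := by
          by_cases h' : w = u
          · exact Or.inl h'
          · right; have : w ∈ ({u}ᶜ : Set (Fin k')) := h'
            rw [hs'] at this; exact this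
        rcases hz with rfl | rfl <;> rcases hw with rfl | rfl
        · exact H'.irrefl hadj
        · exact hiso w hadj.symm
        · exact hiso z hadj
        · exact H'.irrefl hadj
    · have : u ∈ ({u}ᶜ : Set (Fin k')) := h ▸ Set.mem_univ u
      simp at this
  · push_neg at hTu
    obtain ⟨v₀, hv₀⟩ := hTu
    have hTA : T.Nonempty := by
      obtain ⟨a, ha⟩ := hA1
      exact ⟨φ' a, a, rfl, ha⟩
    have hmod : IsModule H' T := by
      intro a ha b hbm w hw
      exact iff_of_false (fun h => hTc a ha w hw h.symm) (fun h => hTc b hbm w hw h.symm)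
    rcases hp T hmod with h | ⟨s, hs⟩ | h
    · rw [h] at hTA; exact absurd hTA (by simp)
    · have hmodc : IsModule H' (Tᶜ) := by
        intro a ha b hbm w hw
        have hwT : w ∈ T := by simpa using hw
        exact iff_of_false (hTc w hwT a ha) (hTc w hwT b hbm)
      rcases hp _ hmodc with h' | ⟨t, ht⟩ | h'
      · exfalso
        rw [Set.eq_empty_iff_forall_notMem] at h'
        exact h' v₀ hv₀
      · have hsT : s ∈ T := hs ▸ rfl
        have htT : t ∉ T := by
          have : t ∈ (Tᶜ : Set (Fin k')) := ht ▸ rfl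
          simpa using this
        have hst : s ≠ t := fun h => htT (h ▸ hsT)
        refine ⟨s, t, hst, ?_, ?_⟩
        · intro z
          by_cases hz : z ∈ T
          · left; rw [hs] at hz; exact hz
          · right
            have : z ∈ (Tᶜ : Set (Fin k')) := hz
            rw [ht] at this; exact this
        · intro z w hadj
          have hz : z = s ∨ z = t := by
            by_cases h' : z ∈ T
            · left; rw [hs] at h'; exact h'
            · right; have : z ∈ (Tᶜ : Set (Fin k')) := h'
              rw [ht] at this; exact this
          have hw : w = s ∨ w = t := by
            by_cases h' : w ∈ T
            · left; rw [hs] at h'; exact h'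
            · right; have : w ∈ (Tᶜ : Set (Fin k')) := h'
              rw [ht] at this; exact this
          rcases hz with rfl | rfl <;> rcases hw with rfl | rfl
          · exact H'.irrefl hadj
          · exact hTc z hsT w htT hadj
          · exact hTc w hsT z htT hadj.symm
          · exact H'.irrefl hadj
      · have : s ∈ (Tᶜ : Set (Fin k')) := h' ▸ Set.mem_univ s
        exact (this (hs ▸ rfl)).elim
    · exact (hv₀ (h ▸ Set.mem_univ v₀)).elim

end ModDecomp

namespace ModDecomp

variable {V : Type*} {G : SimpleGraph V}

lemma fiber_maxmod [Finite V] {k : ℕ} (h1 : ¬ SplitBot G) (h2 : ¬ SplitTop G)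
    (H : SimpleGraph (Fin k)) (φ : V → Fin k)
    (hp : IsPrimeGraph H) (hi : IsInflation G H φ) (hk : 2 ≤ k) (x : V) :
    MaxMod G (φ ⁻¹' {φ x}) := by
  set F : Set V := φ ⁻¹' {φ x} with hF
  have hFmod : IsModule G F := fiber_isModule hi (φ x)
  have hfib_ne_univ : ∀ u : Fin k, (φ ⁻¹' {u}) ≠ Set.univ := by
    intro u h
    obtain ⟨u', hu'⟩ := Fintype.exists_ne_of_one_lt_card (by rw [Fintype.card_fin]; omega) u
    obtain ⟨y, hy⟩ := hi.1 u'
    have : y ∈ φ ⁻¹' {u} := h ▸ Set.mem_univ y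
    exact hu' (by rw [← hy]; exact this)
  obtain ⟨P, hFP, hPmax⟩ := exists_maxmod hFmod (hfib_ne_univ (φ x))
  have himg : IsModule H (φ '' P) := image_isModule hi hPmax.1
  rcases hp _ himg with h | ⟨t, ht⟩ | h
  · exfalso
    have : φ x ∈ φ '' P := ⟨x, hFP rfl, rfl⟩
    rw [h] at this
    exact this
  · -- P = F
    have hxP : x ∈ P := hFP rfl
    have htx : t = φ x := by
      have : φ x ∈ φ '' P := ⟨x, hxP, rfl⟩
      rw [ht] at this
      exact this.symm
    have hPF : P ⊆ F := by
      intro p hp'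
      have : φ p ∈ φ '' P := ⟨p, hp', rfl⟩
      rw [ht] at this
      show φ p ∈ ({φ x} : Set (Fin k))
      rw [← htx]; exact this
    have : P = F := Set.Subset.antisymm hPF hFP
    rw [← this]
    exact hPmax
  · -- φ '' P = univ, contradiction
    exfalso
    obtain ⟨y, hy⟩ := Set.ne_univ_iff_exists_notMem P |>.mp hPmax.2.1
    set N : Set V := φ ⁻¹' {φ y} with hN
    have hNmod : IsModule G N := fiber_isModule hi (φ y)
    have hPN : (P ∩ N).Nonempty := by
      have : φ y ∈ φ '' P := h ▸ Set.mem_univ _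
      obtain ⟨p, hpP, hpy⟩ := this
      exact ⟨p, hpP, by show φ p ∈ ({φ y} : Set (Fin k)); rw [hpy]; rfl⟩
    have hUmod : IsModule G (P ∪ N) := isModule_union hPmax.1 hNmod hPN
    have hUuniv : P ∪ N = Set.univ := by
      by_contra hne
      have := hPmax.2.2 (P ∪ N) hUmod hne Set.subset_union_left
      exact hy (this ▸ Or.inr (show y ∈ N from rfl))
    have hNPne : (N \ P).Nonempty := ⟨y, rfl, hy⟩
    have hPNne : (P \ N).Nonempty := by
      obtain ⟨u', hu'⟩ := Fintype.exists_ne_of_one_lt_card (by rw [Fintype.card_fin]; omega) (φ y)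
      have : u' ∈ φ '' P := h ▸ Set.mem_univ _
      obtain ⟨q, hqP, hqu⟩ := this
      refine ⟨q, hqP, ?_⟩
      intro hqN
      have : φ q = φ y := hqN
      rw [hqu] at this
      exact hu' this
    exact overlap_contradiction h1 h2 hPmax.1 hNmod hPN hPNne hNPne hUuniv

lemma iso_of_fiber_eq [Nonempty V] {k k' : ℕ} (H : SimpleGraph (Fin k))
    (H' : SimpleGraph (Fin k')) (φ : V → Fin k) (φ' : V → Fin k')
    (hi : IsInflation G H φ) (hi' : IsInflation G H' φ')
    (he : ∀ x y : V, φ x = φ y ↔ φ' x = φ' y) : Nonempty (H ≃g H') := by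
  set f : Fin k → Fin k' := fun u => φ' (Function.surjInv hi.1 u) with hf
  have hsec : ∀ u, φ (Function.surjInv hi.1 u) = u := fun u => Function.surjInv_eq hi.1 u
  have hkey : ∀ x, f (φ x) = φ' x := by
    intro x
    exact (he (Function.surjInv hi.1 (φ x)) x).mp (hsec (φ x))
  have hinj : Function.Injective f := by
    intro u v huv
    have := (he _ _).mpr huv
    rw [hsec u, hsec v] at this
    exact this
  have hsurj : Function.Surjective f := by
    intro t
    obtain ⟨x, hx⟩ := hi'.1 t
    exact ⟨φ x, by rw [hkey x, hx]⟩
  refine ⟨⟨Equiv.ofBijective f ⟨hinj, hsurj⟩, ?_⟩⟩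
  intro u v
  show H'.Adj (f u) (f v) ↔ H.Adj u v
  by_cases huv : u = v
  · subst huv
    simp
  · set a := Function.surjInv hi.1 u with ha
    set b := Function.surjInv hi.1 v with hb
    have hab : φ a ≠ φ b := by rw [hsec u, hsec v]; exact huv
    have h1 : G.Adj a b ↔ H.Adj u v := by
      have := hi.2 a b hab
      rwa [hsec u, hsec v] at this
    have hab' : φ' a ≠ φ' b := fun h => hab ((he a b).mpr h)
    have h2 : G.Adj a b ↔ H'.Adj (f u) (f v) := hi'.2 a b hab'
    rw [← h1, ← h2]

end ModDecomp

namespace ModDecomp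

variable {V : Type*} {G : SimpleGraph V}

lemma exists_prime_inflation_noSplit [Fintype V] (G : SimpleGraph V)
    (hV : 2 ≤ Fintype.card V) (h1 : ¬ SplitBot G) (h2 : ¬ SplitTop G) :
    ∃ (k : ℕ) (H : SimpleGraph (Fin k)) (φ : V → Fin k),
      2 ≤ k ∧ IsPrimeGraph H ∧ IsInflation G H φ := by
  classical
  have hsing : ∀ x : V, ({x} : Set V) ≠ Set.univ := by
    intro x h
    obtain ⟨y, hy⟩ := Fintype.exists_ne_of_one_lt_card hV x
    have : y ∈ ({x} : Set V) := h ▸ Set.mem_univ y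
    exact hy this
  have hex : ∀ x : V, ∃ P, MaxMod G P ∧ x ∈ P := by
    intro x
    obtain ⟨P, hsub, hmax⟩ := exists_maxmod (isModule_singleton x) (hsing x)
    exact ⟨P, hmax, hsub rfl⟩
  choose ψ hψmax hψmem using hex
  have huniq : ∀ x P, MaxMod G P → x ∈ P → P = ψ x := fun x P hP hx =>
    maxmod_eq h1 h2 hP (hψmax x) ⟨x, hx, hψmem x⟩
  have hfib : ∀ x y : V, ψ x = ψ y ↔ y ∈ ψ x := by
    intro x y
    constructor
    · intro h; rw [h]; exact hψmem y
    · intro h; exact huniq y (ψ x) (hψmax x) h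
  haveI : Fintype ↥(Set.range ψ) := (Set.finite_range ψ).fintype
  set k := Fintype.card ↥(Set.range ψ) with hk
  set e : ↥(Set.range ψ) ≃ Fin k := Fintype.equivFin _ with he
  set φ : V → Fin k := fun x => e ⟨ψ x, Set.mem_range_self x⟩ with hφ
  have hφeq : ∀ x y : V, φ x = φ y ↔ ψ x = ψ y := by
    intro x y
    constructor
    · intro h
      have := e.injective h
      exact congrArg Subtype.val this
    · intro h
      simp only [hφ]
      congr 1
      exact Subtype.ext h
  have hφsurj : Function.Surjective φ := by
    intro i
    obtain ⟨x, hx⟩ := (e.symm i).2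
    refine ⟨x, ?_⟩
    show e ⟨ψ x, Set.mem_range_self x⟩ = i
    have h' : (⟨ψ x, Set.mem_range_self x⟩ : ↥(Set.range ψ)) = e.symm i := Subtype.ext hx
    rw [h', Equiv.apply_symm_apply]
  set H : SimpleGraph (Fin k) :=
    { Adj := fun i j => i ≠ j ∧ ∃ x y, φ x = i ∧ φ y = j ∧ G.Adj x y
      symm := ⟨by
        rintro i j ⟨hne, x, y, hx, hy, hadj⟩
        exact ⟨hne.symm, y, x, hy, hx, hadj.symm⟩⟩
      loopless := ⟨fun i h => h.1 rfl⟩ } with hH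
  have hdisj : ∀ x y : V, ψ x ≠ ψ y → x ∉ ψ y := by
    intro x y hne hx
    exact hne ((huniq x (ψ y) (hψmax y) hx).symm ▸ (huniq x (ψ x) (hψmax x) (hψmem x)) ▸ rfl)
  have hinfl : IsInflation G H φ := by
    refine ⟨hφsurj, ?_⟩
    intro u v huv
    constructor
    · intro hadj
      exact ⟨huv, u, v, rfl, rfl, hadj⟩
    · rintro ⟨hne, x, y, hx, hy, hadj⟩
      have hxu : ψ x = ψ u := (hφeq x u).mp hx
      have hyv : ψ y = ψ v := (hφeq y v).mp hy
      have hψne : ψ u ≠ ψ v := fun h => huv ((hφeq u v).mpr h)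
      -- x ∈ ψ u, y ∈ ψ v, transfer adjacency
      have hxmem : x ∈ ψ u := hxu ▸ hψmem x
      have hymem : y ∈ ψ v := hyv ▸ hψmem y
      have humem : u ∈ ψ u := hψmem u
      have hvmem : v ∈ ψ v := hψmem v
      have hyout : y ∉ ψ u := by
        intro hy'
        exact hψne ((huniq y (ψ u) (hψmax u) hy').trans (huniq y (ψ v) (hψmax v) hymem).symm)
      have huout : u ∉ ψ v := by
        intro hu'
        exact hψne ((huniq u (ψ v) (hψmax v) hu').trans (huniq u (ψ u) (hψmax u) humem).symm).symm
      have step1 : G.Adj y x ↔ G.Adj y u := (hψmax u).1 x hxmem u humem y hyout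
      have step2 : G.Adj u y ↔ G.Adj u v := (hψmax v).1 y hymem v hvmem u huout
      rw [← step2, G.adj_comm u y, ← step1, G.adj_comm y x]
      exact hadj
  have hk2 : 2 ≤ k := by
    have hne' : Nonempty V := by
      rw [← Fintype.card_pos_iff]
      omega
    obtain ⟨x₀⟩ := hne'
    obtain ⟨y, hy⟩ := Set.ne_univ_iff_exists_notMem (ψ x₀) |>.mp (hψmax x₀).2.1
    have hne : φ y ≠ φ x₀ := by
      intro h
      have := (hφeq y x₀).mp h
      exact hy (this ▸ hψmem y)
    have h1k : 1 < Fintype.card (Fin k) := Fintype.one_lt_card_iff.mpr ⟨_, _, hne⟩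
    rw [Fintype.card_fin] at h1k
    omega
  refine ⟨k, H, φ, hk2, ?_, hinfl⟩
  -- primality
  intro S hS
  by_cases hSe : S = ∅
  · exact Or.inl hSe
  obtain ⟨u, hu⟩ := Set.nonempty_iff_ne_empty.mpr hSe
  by_cases hall : ∀ v ∈ S, v = u
  · refine Or.inr (Or.inl ⟨u, ?_⟩)
    ext z
    simp only [Set.mem_singleton_iff]
    exact ⟨fun hz => hall z hz, fun hz => hz ▸ hu⟩
  push_neg at hall
  obtain ⟨v, hv, hvu⟩ := hall
  right; right
  by_contra hSu
  obtain ⟨t, ht⟩ := Set.ne_univ_iff_exists_notMem S |>.mp hSu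
  have hpre : IsModule G (φ ⁻¹' S) := preimage_isModule hinfl hS
  have hpreu : φ ⁻¹' S ≠ Set.univ := by
    obtain ⟨y, hy⟩ := hφsurj t
    intro h
    have : y ∈ φ ⁻¹' S := h ▸ Set.mem_univ y
    exact ht (hy ▸ this)
  obtain ⟨x, hx⟩ := hφsurj u
  have hsub : ψ x ⊆ φ ⁻¹' S := by
    intro z hz
    have : ψ z = ψ x := (hfib x z).mpr hz |>.symm
    have : φ z = φ x := (hφeq z x).mpr this
    show φ z ∈ S
    rw [this, hx]
    exact hu
  have hPeq : φ ⁻¹' S = ψ x := (hψmax x).2.2 _ hpre hpreu hsub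
  obtain ⟨z', hz'⟩ := hφsurj v
  have : z' ∈ φ ⁻¹' S := by show φ z' ∈ S; rw [hz']; exact hv
  rw [hPeq] at this
  have : φ z' = φ x := (hφeq z' x).mpr ((hfib x z').mpr this).symm
  rw [hz', hx] at this
  exact hvu this

end ModDecomp


open ModDecomp

/-- Modular decomposition: every finite graph on at least two vertices is the
inflation of a unique (up to isomorphism) prime graph on at least two vertices
by nonempty graphs. -/
theorem modular_decomposition (V : Type) [Fintype V] (G : SimpleGraph V)
    (hV : 2 ≤ Fintype.card V) :
    ∃ (k : ℕ) (H : SimpleGraph (Fin k)) (φ : V → Fin k),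
      2 ≤ k ∧ IsPrimeGraph H ∧ IsInflation G H φ ∧
      ∀ (k' : ℕ) (H' : SimpleGraph (Fin k')) (φ' : V → Fin k'),
        2 ≤ k' → IsPrimeGraph H' → IsInflation G H' φ' → Nonempty (H ≃g H') := by
  classical
  by_cases h1 : SplitBot G
  · obtain ⟨A, hA1, hA2, hA3⟩ := h1
    obtain ⟨a0, ha0⟩ := hA1
    obtain ⟨b0, hb0⟩ := hA2
    refine ⟨2, ⊥, fun x => if x ∈ A then 0 else 1, le_refl 2, isPrime_two _, ⟨?_, ?_⟩, ?_⟩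
    · intro i
      have : i = 0 ∨ i = 1 := by omega
      rcases this with rfl | rfl
      · exact ⟨a0, if_pos ha0⟩
      · exact ⟨b0, if_neg hb0⟩
    · intro u v huv
      simp only [SimpleGraph.bot_adj, iff_false]
      intro hadj
      by_cases hu : u ∈ A <;> by_cases hv : v ∈ A
      · simp [hu, hv] at huv
      · exact hA3 u hu v hv hadj
      · exact hA3 v hv u hu hadj.symm
      · simp [hu, hv] at huv
    · intro k' H' φ' hk' hp' hi'
      obtain ⟨s, t, hst, hall, hno⟩ :=
        split_bot_classify A ⟨a0, ha0⟩ ⟨b0, hb0⟩ hA3 H' φ' hp' hi' hk'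
      exact iso_of_two ⊥ H' s t hst hall False (by simp) (fun z w => by simp [hno z w])
  by_cases h2 : SplitTop G
  · obtain ⟨A, hA1, hA2, hA3⟩ := h2
    obtain ⟨a0, ha0⟩ := hA1
    obtain ⟨b0, hb0⟩ := hA2
    have hA3c : ∀ a ∈ A, ∀ b ∈ Aᶜ, ¬ Gᶜ.Adj a b := by
      intro a ha b hb hadj
      exact hadj.2 (hA3 a ha b hb)
    have hcl : ∀ {k' : ℕ} (H' : SimpleGraph (Fin k')) (φ' : V → Fin k'),
        2 ≤ k' → IsPrimeGraph H' → IsInflation G H' φ' →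
        ∀ z w : Fin k', H'.Adj z w ↔ (z ≠ w ∧ True) := by
      intro k' H' φ' hk' hp' hi'
      obtain ⟨s, t, hst, hall, hno⟩ :=
        split_bot_classify A ⟨a0, ha0⟩ ⟨b0, hb0⟩ hA3c (H'ᶜ) φ'
          (isPrimeGraph_compl hp') (isInflation_compl hi') hk'
      intro z w
      constructor
      · intro hadj; exact ⟨H'.ne_of_adj hadj, trivial⟩
      · rintro ⟨hne, -⟩
        by_contra hnadj
        exact hno z w ⟨hne, hnadj⟩
    refine ⟨2, ⊤, fun x => if x ∈ A then 0 else 1, le_refl 2, isPrime_two _, ⟨?_, ?_⟩, ?_⟩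
    · intro i
      have : i = 0 ∨ i = 1 := by omega
      rcases this with rfl | rfl
      · exact ⟨a0, if_pos ha0⟩
      · exact ⟨b0, if_neg hb0⟩
    · intro u v huv
      simp only [SimpleGraph.top_adj]
      have hne : u ≠ v := fun h => huv (h ▸ rfl)
      constructor
      · intro _; exact huv
      · intro _
        by_cases hu : u ∈ A <;> by_cases hv : v ∈ A
        · simp [hu, hv] at huv
        · exact hA3 u hu v hv
        · exact (hA3 v hv u hu).symm
        · simp [hu, hv] at huv
    · intro k' H' φ' hk' hp' hi'
      have h2' : IsInflation G ⊤ (fun x => if x ∈ A then (0 : Fin 2) else 1) := by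
        refine ⟨?_, ?_⟩
        · intro i
          have : i = 0 ∨ i = 1 := by omega
          rcases this with rfl | rfl
          · exact ⟨a0, if_pos ha0⟩
          · exact ⟨b0, if_neg hb0⟩
        · intro u v huv
          simp only [SimpleGraph.top_adj]
          constructor
          · intro _; exact huv
          · intro _
            by_cases hu : u ∈ A <;> by_cases hv : v ∈ A
            · simp [hu, hv] at huv
            · exact hA3 u hu v hv
            · exact (hA3 v hv u hu).symm
            · simp [hu, hv] at huv
      have hKadj := hcl (⊤ : SimpleGraph (Fin 2)) _ (le_refl 2) (isPrime_two _) h2'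
      have hHadj := hcl H' φ' hk' hp' hi'
      obtain ⟨s, t, hst, hall, -⟩ :=
        split_bot_classify A ⟨a0, ha0⟩ ⟨b0, hb0⟩ hA3c (H'ᶜ) φ'
          (isPrimeGraph_compl hp') (isInflation_compl hi') hk'
      exact iso_of_two ⊤ H' s t hst hall True hKadj hHadj
  · -- no split: the maximal-modules quotient
    obtain ⟨k, H, φ, hk, hp, hi⟩ := exists_prime_inflation_noSplit G hV h1 h2
    refine ⟨k, H, φ, hk, hp, hi, ?_⟩
    intro k' H' φ' hk' hp' hi'
    haveI : Nonempty V := by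
      rw [← Fintype.card_pos_iff]; omega
    have he : ∀ x y : V, φ x = φ y ↔ φ' x = φ' y := by
      intro x y
      have m1 := fiber_maxmod h1 h2 H φ hp hi hk x
      have m2 := fiber_maxmod h1 h2 H' φ' hp' hi' hk' x
      have heq : (φ ⁻¹' {φ x}) = (φ' ⁻¹' {φ' x}) :=
        maxmod_eq h1 h2 m1 m2 ⟨x, rfl, rfl⟩
      constructor
      · intro h
        have : y ∈ φ ⁻¹' {φ x} := by simp [h]
        rw [heq] at this
        exact (Set.mem_singleton_iff.mp this).symm
      · intro h
        have : y ∈ φ' ⁻¹' {φ' x} := by simp [h]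
        rw [← heq] at this
        exact (Set.mem_singleton_iff.mp this).symm
    exact iso_of_fiber_eq H H' φ φ' hi hi' he
end

section
/- Every vertex of a prime graph H on at least four vertices either lies in an induced copy of the path P₄ in H, or is the nose of an induced copy of the bull in H (i.e., there are vertices a, b, c, d of H such that a-b-c-d is an induced P₄ and the given vertex is adjacent to b and c and not adjacent to a and d). -/
/-- `a-b-c-d` is an induced copy of the path `P₄` in `G`. -/
def InducedP4 {V : Type*} (G : SimpleGraph V) (a b c d : V) : Prop :=
  a ≠ b ∧ a ≠ c ∧ a ≠ d ∧ b ≠ c ∧ b ≠ d ∧ c ≠ d ∧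
    G.Adj a b ∧ G.Adj b c ∧ G.Adj c d ∧ ¬G.Adj a c ∧ ¬G.Adj a d ∧ ¬G.Adj b d

lemma mkP4 {V : Type*} {G : SimpleGraph V} {a b c d : V}
    (hab : G.Adj a b) (hbc : G.Adj b c) (hcd : G.Adj c d)
    (hac : ¬G.Adj a c) (had : ¬G.Adj a d) (hbd : ¬G.Adj b d) :
    InducedP4 G a b c d := by
  refine ⟨hab.ne, ?_, ?_, hbc.ne, ?_, hcd.ne, hab, hbc, hcd, hac, had, hbd⟩
  · rintro rfl; exact had hcd
  · rintro rfl; exact hbd hab.symm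
  · rintro rfl; exact had hab

lemma exists_ne_ne {V : Type} [Fintype V] (h : 3 ≤ Fintype.card V) (a b : V) :
    ∃ c, c ≠ a ∧ c ≠ b := by
  classical
  by_contra hc
  push_neg at hc
  have hsub : (Finset.univ : Finset V) ⊆ {a, b} := by
    intro v _
    by_cases hv : v = a
    · simp [hv]
    · simp [hc v hv]
  have h1 := Finset.card_le_card hsub
  have h2 : ({a, b} : Finset V).card ≤ 2 :=
    (Finset.card_insert_le a {b}).trans (by simp)
  rw [Finset.card_univ] at h1
  omega

/-- Every vertex of a prime graph on at least four vertices lies in an induced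
`P₄` or is the nose of an induced bull. -/
theorem prime_vertex_in_P4_or_bull_nose (V : Type) [Fintype V] (H : SimpleGraph V)
    (hprime : IsPrimeGraph H) (hcard : 4 ≤ Fintype.card V) (x : V) :
    (∃ a b c d : V, InducedP4 H a b c d ∧ (x = a ∨ x = b ∨ x = c ∨ x = d)) ∨
      (∃ a b c d : V, InducedP4 H a b c d ∧ x ≠ a ∧ x ≠ b ∧ x ≠ c ∧ x ≠ d ∧
        H.Adj x b ∧ H.Adj x c ∧ ¬H.Adj x a ∧ ¬H.Adj x d) := by
  classical
  by_contra hcon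
  push_neg at hcon
  obtain ⟨hP4, hBull⟩ := hcon
  have card3 : 3 ≤ Fintype.card V := by omega
  -- N(x) is nonempty
  have hN : ∃ n, H.Adj x n := by
    by_contra hno
    push_neg at hno
    have hmod : IsModule H {v | v ≠ x} := by
      intro u _ v _ w hw
      have hwx : w = x := not_not.mp hw
      subst hwx
      exact iff_of_false (hno u) (hno v)
    rcases hprime _ hmod with he | ⟨y, hy⟩ | hu
    · obtain ⟨c, hca, -⟩ := exists_ne_ne card3 x x
      have : c ∈ ({v | v ≠ x} : Set V) := hca
      rw [he] at this
      exact this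
    · obtain ⟨c, hca, hcb⟩ := exists_ne_ne card3 x y
      have : c ∈ ({v | v ≠ x} : Set V) := hca
      rw [hy] at this
      exact hcb this
    · have : x ∈ ({v | v ≠ x} : Set V) := by rw [hu]; trivial
      exact this rfl
  -- M (non-neighbors other than x) is nonempty
  have hM : ∃ m, m ≠ x ∧ ¬H.Adj x m := by
    by_contra hno
    push_neg at hno
    have hmod : IsModule H {v | v ≠ x} := by
      intro u hu v hv w hw
      have hwx : w = x := not_not.mp hw
      subst hwx
      exact iff_of_true (hno u hu) (hno v hv)
    rcases hprime _ hmod with he | ⟨y, hy⟩ | hu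
    · obtain ⟨c, hca, -⟩ := exists_ne_ne card3 x x
      have : c ∈ ({v | v ≠ x} : Set V) := hca
      rw [he] at this
      exact this
    · obtain ⟨c, hca, hcb⟩ := exists_ne_ne card3 x y
      have : c ∈ ({v | v ≠ x} : Set V) := hca
      rw [hy] at this
      exact hcb this
    · have : x ∈ ({v | v ≠ x} : Set V) := by rw [hu]; trivial
      exact this rfl
  -- closure fact: a neighbor of a vertex of D_n lying in M is again in D_n
  have key3 : ∀ n u z : V, H.Adj x n → ¬H.Adj x u → ¬H.Adj x z →
      H.Adj n u → H.Adj u z → H.Adj n z := by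
    intro n u z hxn hxu hxz hnu huz
    by_contra hnz
    exact (hP4 x n u z (mkP4 hxn hnu huz hxu hxz hnz)).1 rfl
  -- nonadjacent neighbors of x have the same neighborhoods in M
  have key2 : ∀ n n' w : V, H.Adj x n → H.Adj x n' → ¬H.Adj n n' →
      ¬H.Adj x w → H.Adj n' w → H.Adj n w := by
    intro n n' w hxn hxn' hnn' hxw hn'w
    by_contra hnw
    exact (hP4 n x n' w (mkP4 hxn.symm hxn' hn'w hnn' hnw hxw)).2.1 rfl
  -- the M-neighborhoods of neighbors of x form a chain
  have chain : ∀ n n' : V, H.Adj x n → H.Adj x n' →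
      (∀ w, w ≠ x → ¬H.Adj x w → H.Adj n w → H.Adj n' w) ∨
      (∀ w, w ≠ x → ¬H.Adj x w → H.Adj n' w → H.Adj n w) := by
    intro n n' hxn hxn'
    by_cases hadj : H.Adj n n'
    · by_contra hc
      push_neg at hc
      obtain ⟨⟨a, hax, hxa, hna, hn'a⟩, ⟨d, hdx, hxd, hn'd, hnd⟩⟩ := hc
      by_cases had : H.Adj a d
      · exact hnd (key3 n a d hxn hxa hxd hna had)
      · have p4 : InducedP4 H a n n' d :=
          mkP4 hna.symm hadj hn'd (fun h => hn'a h.symm) had hnd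
        exact hxd (hBull a n n' d p4 (Ne.symm hax) hxn.ne hxn'.ne (Ne.symm hdx)
          hxn hxn' hxa)
    · left
      intro w hwx hxw hnw
      exact key2 n' n w hxn' hxn (fun h => hadj h.symm) hxw hnw
  -- the M-neighborhood of n as a Finset
  set Dfin : V → Finset V :=
    fun n => Finset.univ.filter (fun w => w ≠ x ∧ ¬H.Adj x w ∧ H.Adj n w) with hDfin
  have hDmem : ∀ n w : V, w ∈ Dfin n ↔ (w ≠ x ∧ ¬H.Adj x w ∧ H.Adj n w) := by
    intro n w
    simp [hDfin]
  -- some neighbor of x has a neighbor in M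
  have hexists : ∃ n, H.Adj x n ∧ (Dfin n).Nonempty := by
    by_contra hno
    push_neg at hno
    have hNM : ∀ n w, H.Adj x n → w ≠ x → ¬H.Adj x w → ¬H.Adj n w := by
      intro n w hxn hwx hxw hnw
      exact Finset.nonempty_iff_ne_empty.mp ⟨w, (hDmem n w).mpr ⟨hwx, hxw, hnw⟩⟩ (hno n hxn)
    have hmod : IsModule H {v | v = x ∨ H.Adj x v} := by
      intro u hu v hv w hw
      simp only [Set.mem_setOf_eq] at hu hv hw
      push_neg at hw
      obtain ⟨hwx, hxw⟩ := hw
      have hnone : ∀ u', u' = x ∨ H.Adj x u' → ¬H.Adj w u' := by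
        rintro u' (rfl | hu') h
        · exact hxw h.symm
        · exact hNM u' w hu' hwx hxw h.symm
      exact iff_of_false (hnone u hu) (hnone v hv)
    rcases hprime _ hmod with he | ⟨y, hy⟩ | hu
    · have : x ∈ ({v | v = x ∨ H.Adj x v} : Set V) := Or.inl rfl
      rw [he] at this
      exact this
    · obtain ⟨n, hxn⟩ := hN
      have h1 : x ∈ ({v | v = x ∨ H.Adj x v} : Set V) := Or.inl rfl
      have h2 : n ∈ ({v | v = x ∨ H.Adj x v} : Set V) := Or.inr hxn
      rw [hy] at h1 h2
      exact hxn.ne (h1.trans h2.symm)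
    · obtain ⟨m, hmx, hxm⟩ := hM
      have : m ∈ ({v | v = x ∨ H.Adj x v} : Set V) := by rw [hu]; trivial
      rcases this with rfl | h
      · exact hmx rfl
      · exact hxm h
  -- pick n₀ with minimal nonempty M-neighborhood
  obtain ⟨n₀, hxn₀, hDne, hn₀min⟩ : ∃ n₀, H.Adj x n₀ ∧ (Dfin n₀).Nonempty ∧
      ∀ n, H.Adj x n → (Dfin n).Nonempty → (Dfin n₀).card ≤ (Dfin n).card := by
    obtain ⟨n₀, hmem, hmin⟩ := Finset.exists_min_image
      (Finset.univ.filter (fun n => H.Adj x n ∧ (Dfin n).Nonempty))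
      (fun n => (Dfin n).card)
      (by obtain ⟨n, h1, h2⟩ := hexists; exact ⟨n, by simp [h1, h2]⟩)
    simp only [Finset.mem_filter, Finset.mem_univ, true_and] at hmem
    exact ⟨n₀, hmem.1, hmem.2, fun n h1 h2 => hmin n (by simp [h1, h2])⟩
  -- minimality: every nonempty M-neighborhood contains D
  have hsub : ∀ n, H.Adj x n → (Dfin n).Nonempty → Dfin n₀ ⊆ Dfin n := by
    intro n h1 h2
    rcases chain n₀ n hxn₀ h1 with hc | hc
    · intro w hw
      rw [hDmem] at hw ⊢
      exact ⟨hw.1, hw.2.1, hc w hw.1 hw.2.1 hw.2.2⟩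
    · have hsub' : Dfin n ⊆ Dfin n₀ := by
        intro w hw
        rw [hDmem] at hw ⊢
        exact ⟨hw.1, hw.2.1, hc w hw.1 hw.2.1 hw.2.2⟩
      have heq := Finset.eq_of_subset_of_card_le hsub' (hn₀min n h1 h2)
      exact heq.symm ▸ Finset.Subset.refl _
  -- D = Dfin n₀ is a module
  have hmodD : IsModule H (↑(Dfin n₀) : Set V) := by
    intro u hu v hv w hw
    rw [Finset.mem_coe, hDmem] at hu hv
    by_cases hwx : w = x
    · subst hwx
      exact iff_of_false hu.2.1 hv.2.1
    by_cases hxw : H.Adj x w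
    · constructor
      · intro hwu
        have hne : (Dfin w).Nonempty := ⟨u, (hDmem w u).mpr ⟨hu.1, hu.2.1, hwu⟩⟩
        exact ((hDmem w v).mp (hsub w hxw hne ((hDmem n₀ v).mpr hv))).2.2
      · intro hwv
        have hne : (Dfin w).Nonempty := ⟨v, (hDmem w v).mpr ⟨hv.1, hv.2.1, hwv⟩⟩
        exact ((hDmem w u).mp (hsub w hxw hne ((hDmem n₀ u).mpr hu))).2.2
    · have hwm : ∀ z, z ≠ x → ¬H.Adj x z → H.Adj n₀ z → ¬H.Adj w z := by
        intro z hzx hxz hn₀z hwz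
        have hadj : H.Adj n₀ w := key3 n₀ z w hxn₀ hxz hxw hn₀z hwz.symm
        exact hw (Finset.mem_coe.mpr ((hDmem n₀ w).mpr ⟨hwx, hxw, hadj⟩))
      exact iff_of_false (fun h => hwm u hu.1 hu.2.1 hu.2.2 h)
        (fun h => hwm v hv.1 hv.2.1 hv.2.2 h)
  -- by primality, D is a singleton {y}
  obtain ⟨y, hy⟩ : ∃ y, (↑(Dfin n₀) : Set V) = {y} := by
    rcases hprime _ hmodD with he | h | hu
    · obtain ⟨w, hw⟩ := hDne
      have : w ∈ (↑(Dfin n₀) : Set V) := hw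
      rw [he] at this
      exact absurd this (by simp)
    · exact h
    · have : x ∈ (↑(Dfin n₀) : Set V) := by rw [hu]; trivial
      exact absurd (((hDmem n₀ x).mp (Finset.mem_coe.mp this)).1) (by simp)
  have hyD : y ∈ Dfin n₀ := by
    have : y ∈ (↑(Dfin n₀) : Set V) := by rw [hy]; rfl
    exact Finset.mem_coe.mp this
  obtain ⟨hyx, hxy, hn₀y⟩ := (hDmem n₀ y).mp hyD
  have hDeq : ∀ z, z ∈ Dfin n₀ → z = y := by
    intro z hz
    have : z ∈ (↑(Dfin n₀) : Set V) := Finset.mem_coe.mpr hz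
    rw [hy] at this
    exact this
  -- y has no neighbors in M
  have hMnbr : ∀ z, z ≠ x → ¬H.Adj x z → H.Adj z y → z = y := by
    intro z hzx hxz hzy
    have : H.Adj n₀ z := key3 n₀ y z hxn₀ hxy hxz hn₀y hzy.symm
    exact hDeq z ((hDmem n₀ z).mpr ⟨hzx, hxz, this⟩)
  -- every neighbor of x is adjacent to y
  have hNy : ∀ n, H.Adj x n → H.Adj n y := by
    by_contra hc
    push_neg at hc
    obtain ⟨n₁, hxn₁, hn₁y⟩ := hc
    have hmod : IsModule H {v | v = x ∨ (H.Adj x v ∧ ¬H.Adj v y)} := by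
      intro u hu v hv w hw
      simp only [Set.mem_setOf_eq] at hu hv hw
      push_neg at hw
      obtain ⟨hwx, hw2⟩ := hw
      by_cases hxw : H.Adj x w
      · have hall : ∀ u', u' = x ∨ (H.Adj x u' ∧ ¬H.Adj u' y) → H.Adj w u' := by
          rintro u' (rfl | ⟨hxu', hu'y⟩)
          · exact hxw.symm
          · by_contra hwu'
            exact hu'y (key2 u' w y hxu' hxw (fun h => hwu' h.symm) hxy (hw2 hxw))
        exact iff_of_true (hall u hu) (hall v hv)
      · have hnone : ∀ u', u' = x ∨ (H.Adj x u' ∧ ¬H.Adj u' y) → ¬H.Adj w u' := by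
          rintro u' (rfl | ⟨hxu', hu'y⟩) hwu'
          · exact hxw hwu'.symm
          · have hne : (Dfin u').Nonempty :=
              ⟨w, (hDmem u' w).mpr ⟨hwx, hxw, hwu'.symm⟩⟩
            exact hu'y ((hDmem u' y).mp (hsub u' hxu' hne hyD)).2.2
        exact iff_of_false (hnone u hu) (hnone v hv)
    rcases hprime _ hmod with he | ⟨z, hz⟩ | hu
    · have : x ∈ ({v | v = x ∨ (H.Adj x v ∧ ¬H.Adj v y)} : Set V) := Or.inl rfl
      rw [he] at this
      exact this
    · have h1 : x ∈ ({v | v = x ∨ (H.Adj x v ∧ ¬H.Adj v y)} : Set V) := Or.inl rfl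
      have h2 : n₁ ∈ ({v | v = x ∨ (H.Adj x v ∧ ¬H.Adj v y)} : Set V) :=
        Or.inr ⟨hxn₁, hn₁y⟩
      rw [hz] at h1 h2
      exact hxn₁.ne (h1.trans h2.symm)
    · have : y ∈ ({v | v = x ∨ (H.Adj x v ∧ ¬H.Adj v y)} : Set V) := by
        rw [hu]; trivial
      rcases this with rfl | ⟨h, -⟩
      · exact hyx rfl
      · exact hxy h
  -- {x, y} is a module: final contradiction
  have hmod2 : IsModule H {v | v = x ∨ v = y} := by
    intro u hu v hv w hw
    simp only [Set.mem_setOf_eq] at hu hv hw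
    push_neg at hw
    obtain ⟨hwx, hwy⟩ := hw
    by_cases hxw : H.Adj x w
    · have hall : ∀ u', u' = x ∨ u' = y → H.Adj w u' := by
        rintro u' (rfl | rfl)
        · exact hxw.symm
        · exact hNy w hxw
      exact iff_of_true (hall u hu) (hall v hv)
    · have hnone : ∀ u', u' = x ∨ u' = y → ¬H.Adj w u' := by
        rintro u' (rfl | rfl) hwu
        · exact hxw hwu.symm
        · exact hwy (hMnbr w hwx hxw hwu)
      exact iff_of_false (hnone u hu) (hnone v hv)
  rcases hprime _ hmod2 with he | ⟨z, hz⟩ | hu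
  · have : x ∈ ({v | v = x ∨ v = y} : Set V) := Or.inl rfl
    rw [he] at this
    exact this
  · have h1 : x ∈ ({v | v = x ∨ v = y} : Set V) := Or.inl rfl
    have h2 : y ∈ ({v | v = x ∨ v = y} : Set V) := Or.inr rfl
    rw [hz] at h1 h2
    exact hyx (h2.trans h1.symm)
  · obtain ⟨n, hxn⟩ := hN
    have : n ∈ ({v | v = x ∨ v = y} : Set V) := by rw [hu]; trivial
    rcases this with rfl | rfl
    · exact hxn.ne rfl
    · exact hxy hxn
end

section
/- If a finite simple graph G can be obtained from an induced subgraph G' by a finite sequence of vertex additions, each of which adds either an isolated vertex (adjacent to no vertex present at that stage) or a dominating vertex (adjacent to every vertex present at that stage), then ℓ(G) ≤ ℓ(G') + 2. -/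
lemma hasLettering_card {V : Type*} [Fintype V] (G : SimpleGraph V) :
    HasLettering G (Fintype.card V) := by
  classical
  let e := Fintype.equivFin V
  refine ⟨{p | ∃ u v, G.Adj u v ∧ e u = p.1 ∧ e v = p.2}, e, fun v => (e v).val,
    fun a b h => e.injective (Fin.val_injective h), ?_⟩
  intro u v huv _
  constructor
  · exact fun h => ⟨u, v, h, rfl, rfl⟩
  · rintro ⟨u', v', h, hu, hv⟩
    rwa [e.injective hu, e.injective hv] at h

/-- If `G` is obtained from its induced subgraph on `s` by successively adding
vertices (in the order given by `ord`), each added vertex being isolated or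
dominating at the stage of its addition, then `ℓ(G) ≤ ℓ(G') + 2`. -/
theorem lettericity_of_iso_dom_extension (V : Type) [Fintype V] (G : SimpleGraph V)
    (s : Set V) (ord : V → ℕ) (hinj : Set.InjOn ord sᶜ)
    (hadd : ∀ v ∉ s,
      (∀ w, w ≠ v → (w ∈ s ∨ ord w < ord v) → G.Adj v w) ∨
      (∀ w, w ≠ v → (w ∈ s ∨ ord w < ord v) → ¬ G.Adj v w)) :
    lettericity G ≤ lettericity (G.induce s) + 2 := by
  classical
  haveI : Fintype s := (Set.toFinite s).fintype
  set k := lettericity (G.induce s) with hkdef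
  have hne : {n | HasLettering (G.induce s) n}.Nonempty :=
    ⟨Fintype.card ↥s, hasLettering_card (G.induce s)⟩
  have hk : HasLettering (G.induce s) k := Nat.sInf_mem hne
  obtain ⟨D', L', ord', hinj', hlet'⟩ := hk
  -- bound on ord' values
  set N : ℕ := (Finset.univ.sup fun x : s => ord' x) + 1 with hN
  have hNbound : ∀ x : s, ord' x < N := by
    intro x
    have h : ord' x ≤ Finset.univ.sup fun x : s => ord' x :=
      Finset.le_sup (Finset.mem_univ x)
    omega
  -- letters
  have hkk : k ≤ k + 2 := by omega
  set cst : Fin k → Fin (k + 2) := Fin.castLE hkk with hcst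
  set domL : Fin (k + 2) := ⟨k + 1, by omega⟩ with hdomL
  set isoL : Fin (k + 2) := ⟨k, by omega⟩ with hisoL
  set domCond : V → Prop := fun v => ∀ w, w ≠ v → (w ∈ s ∨ ord w < ord v) → G.Adj v w
    with hdomCond
  set L : V → Fin (k + 2) := fun w =>
    if h : w ∈ s then cst (L' ⟨w, h⟩) else (if domCond w then domL else isoL) with hL
  set ordG : V → ℕ := fun w => if h : w ∈ s then ord' ⟨w, h⟩ else N + ord w with hordG
  set D : Set (Fin (k + 2) × Fin (k + 2)) :=
    {p | p.2 = domL ∨ ∃ q ∈ D', p = (cst q.1, cst q.2)} with hD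
  have key : HasLettering G (k + 2) := by
    refine ⟨D, L, ordG, ?_, ?_⟩
    · intro a b hab
      by_cases ha : a ∈ s <;> by_cases hb : b ∈ s <;>
        simp only [hordG, ha, hb, dif_pos, dif_neg, not_false_iff] at hab
      · exact congrArg Subtype.val (hinj' hab)
      · exfalso; have := hNbound ⟨a, ha⟩; omega
      · exfalso; have := hNbound ⟨b, hb⟩; omega
      · exact hinj ha hb (by omega)
    · intro u v huv hord
      by_cases hv : v ∈ s
      · by_cases hu : u ∈ s
        · -- both in s
          have hord2 : ord' ⟨u, hu⟩ < ord' ⟨v, hv⟩ := by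
            simpa only [hordG, dif_pos hu, dif_pos hv] using hord
          have hne : (⟨u, hu⟩ : s) ≠ ⟨v, hv⟩ := fun h => huv (congrArg Subtype.val h)
          have := hlet' ⟨u, hu⟩ ⟨v, hv⟩ hne hord2
          have hadj : G.Adj u v ↔ (G.induce s).Adj ⟨u, hu⟩ ⟨v, hv⟩ := by
            simp [SimpleGraph.comap_adj]
          rw [hadj, this]
          simp only [hD, hL, dif_pos hu, dif_pos hv, Set.mem_setOf_eq]
          constructor
          · intro hmem
            exact Or.inr ⟨(L' ⟨u, hu⟩, L' ⟨v, hv⟩), hmem, rfl⟩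
          · rintro (h | ⟨q, hq, heq⟩)
            · exfalso
              have hc : (cst (L' ⟨v, hv⟩) : ℕ) = k + 1 := by rw [h]
              have hlt : (L' ⟨v, hv⟩ : ℕ) < k := (L' ⟨v, hv⟩).isLt
              simp only [hcst, Fin.coe_castLE] at hc
              omega
            · have h1 : cst q.1 = cst (L' ⟨u, hu⟩) := (Prod.ext_iff.mp heq).1.symm
              have h2 : cst q.2 = cst (L' ⟨v, hv⟩) := (Prod.ext_iff.mp heq).2.symm
              have e1 : q.1 = L' ⟨u, hu⟩ := Fin.castLE_injective hkk h1
              have e2 : q.2 = L' ⟨v, hv⟩ := Fin.castLE_injective hkk h2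
              rw [← e1, ← e2]; exact hq
        · -- u ∉ s, v ∈ s : impossible
          exfalso
          have h1 : ordG u = N + ord u := by simp [hordG, hu]
          have h2 : ordG v = ord' ⟨v, hv⟩ := by simp [hordG, hv]
          have := hNbound ⟨v, hv⟩
          omega
      · -- v ∉ s
        have hside : u ∈ s ∨ ord u < ord v := by
          by_cases hu : u ∈ s
          · exact Or.inl hu
          · right
            have h1 : ordG u = N + ord u := by simp [hordG, hu]
            have h2 : ordG v = N + ord v := by simp [hordG, hv]
            omega
        by_cases hdc : domCond v
        · have hadj : G.Adj u v := (hdc u huv hside).symm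
          have hLv : L v = domL := by simp only [hL]; rw [dif_neg hv, if_pos hdc]
          exact iff_of_true hadj (Or.inl hLv)
        · have hiso : ∀ w, w ≠ v → (w ∈ s ∨ ord w < ord v) → ¬ G.Adj v w :=
            (hadd v hv).resolve_left hdc
          have hadj : ¬ G.Adj u v := fun h => hiso u huv hside h.symm
          have hLv : L v = isoL := by simp only [hL]; rw [dif_neg hv, if_neg hdc]
          simp only [hD, hLv, Set.mem_setOf_eq]
          constructor
          · exact fun h => absurd h hadj
          · rintro (h | ⟨q, hq, heq⟩)
            · exfalso
              have h' := congrArg Fin.val h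
              simp only [hisoL, hdomL] at h'
              omega
            · exfalso
              have h2 : cst q.2 = isoL := (Prod.ext_iff.mp heq).2.symm
              have hlt : (q.2 : ℕ) < k := q.2.isLt
              have h3 : (cst q.2 : ℕ) = k := by rw [h2]
              simp only [hcst, Fin.coe_castLE] at h3
              omega
  calc lettericity G ≤ k + 2 := Nat.sInf_le key
    _ = lettericity (G.induce s) + 2 := by rw [hkdef]
end
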